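/- arXiv:2605.13449 — 4 statements merged into one kernel-verified Lean document; each statement's English description precedes it below -/
import Mathlib

section
/- Let n ≥ 2 and let K ⊂ ℝⁿ be a convex body with r·Bⁿ ⊆ K for some r > 0. Then K ⊆ R₀·Bⁿ, where R₀ = 2^{n−1}·κ_{n−2}^{−1}·r^{−(n−2)}·H^{n−1}(∂K). (Lemma 2.1(ii).) -/
open MeasureTheory Set Pointwise
open scoped RealInnerProductSpace ENNReal NNReal

noncomputable section

/-- The support function `h(K,u) = sup_{x ∈ K} ⟨u,x⟩` of a set `K ⊆ ℝⁿ`. -/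
def suppFn {n : ℕ} (K : Set (EuclideanSpace ℝ (Fin n))) (u : EuclideanSpace ℝ (Fin n)) : ℝ :=
  sSup ((fun x => ⟪u, x⟫) '' K)

/-- The line `g_{x,u} = {x + t u : t ∈ ℝ}` through `x` with direction `u`. -/
def lineThrough {n : ℕ} (x u : EuclideanSpace ℝ (Fin n)) : Set (EuclideanSpace ℝ (Fin n)) :=
  {y | ∃ t : ℝ, y = x + t • u}

/-- The orthogonal projection `A|u^⊥` of a set `A` onto the hyperplane through the
origin orthogonal to the unit vector `u`. -/
def projPerp {n : ℕ} (u : EuclideanSpace ℝ (Fin n)) (A : Set (EuclideanSpace ℝ (Fin n))) :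
    Set (EuclideanSpace ℝ (Fin n)) :=
  (fun x => x - ⟪x, u⟫ • u) '' A

/-- `B ⊆ ℝⁿ` is `(n-1)`-dimensional rectifiable: it is `H^{n-1}`-measurable, has finite
`H^{n-1}` measure, and `H^{n-1}`-almost all of it is covered by countably many Lipschitz
images of `ℝ^{n-1}`. -/
def IsRectifiableCodim1 (n : ℕ) (B : Set (EuclideanSpace ℝ (Fin n))) : Prop :=
  NullMeasurableSet B μH[(n : ℝ) - 1] ∧ μH[(n : ℝ) - 1] B < ⊤ ∧
    ∃ f : ℕ → EuclideanSpace ℝ (Fin (n - 1)) → EuclideanSpace ℝ (Fin n),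
      (∀ i, ∃ C : ℝ≥0, LipschitzWith C (f i)) ∧
        μH[(n : ℝ) - 1] (B \ ⋃ i, Set.range (f i)) = 0

/-- `ω_n = H^{n-1}(S^{n-1})`, the surface area of the unit sphere in `ℝⁿ`. -/
def sphereArea (n : ℕ) : ℝ :=
  (μH[(n : ℝ) - 1] (Metric.sphere (0 : EuclideanSpace ℝ (Fin n)) 1)).toReal

/-- `κ_m`, the Lebesgue volume of the unit ball in `ℝ^m`. -/
def unitBallVol (m : ℕ) : ℝ :=
  (volume (Metric.closedBall (0 : EuclideanSpace ℝ (Fin m)) 1)).toReal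

/-- The mean width `w(K) = (1/ω_n) ∫_{S^{n-1}} (h(K,u) + h(K,-u)) dH^{n-1}(u)`. -/
def meanWidth {n : ℕ} (K : Set (EuclideanSpace ℝ (Fin n))) : ℝ :=
  (sphereArea n)⁻¹ *
    ∫ u in Metric.sphere (0 : EuclideanSpace ℝ (Fin n)) 1,
      (suppFn K u + suppFn K (-u)) ∂μH[(n : ℝ) - 1]

/-! Rotate so that a given point `x ∈ K` lies on the second coordinate axis, and map `ℝⁿ` onto
the last `n - 1` coordinates, carrying the sup norm; this map is 1-Lipschitz, and on the target
`H^{n-1}` is Lebesgue measure. Since `K ⊇ conv({x} ∪ r Bⁿ)`, the image of `K` contains the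
cylinder `[0, ‖x‖/2] × (r/2) B^{n-2}`, and every point of `K` has the same image as some point of
`∂K` (move along the first axis). Hence `H^{n-1}(∂K) ≥ (‖x‖/2) (r/2)^{n-2} κ_{n-2}`.
As the bound is stated through `toReal`, it also needs `H^{n-1}(∂K) < ∞`: `∂K` is covered by the
image of a cube's surface under the 1-Lipschitz metric projection onto `K`. -/

theorem exists_nonneg_add_smul_mem_frontier {E : Type*} [NormedAddCommGroup E]
    [NormedSpace ℝ E] {K : Set E} (hKc : IsClosed K)
    (hKb : Bornology.IsBounded K) {x u : E} (hx : x ∈ K) (hu : u ≠ 0) :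
    ∃ t : ℝ, 0 ≤ t ∧ x + t • u ∈ frontier K := by
  have hγ : Continuous fun t : ℝ => x + t • u := by fun_prop
  set T := (fun t : ℝ => x + t • u) ⁻¹' K
  have hT0 : (0 : ℝ) ∈ T := by simpa [T] using hx
  have hTb : BddAbove T := by
    obtain ⟨C, hC⟩ := hKb.subset_closedBall 0
    refine ⟨(C + ‖x‖) / ‖u‖, fun t ht => ?_⟩
    rw [le_div_iff₀ (norm_pos_iff.2 hu)]
    have hxt := mem_closedBall_zero_iff.1 (hC ht)
    calc t * ‖u‖ ≤ ‖t • u‖ := by rw [norm_smul]; gcongr; exact Real.le_norm_self t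
      _ = ‖(x + t • u) - x‖ := by rw [add_sub_cancel_left]
      _ ≤ C + ‖x‖ := (norm_sub_le _ _).trans (by gcongr)
  have hsT : sSup T ∈ T := (hKc.preimage hγ).csSup_mem ⟨0, hT0⟩ hTb
  refine ⟨sSup T, le_csSup hTb hT0, hγ.frontier_preimage_subset K ?_⟩
  rw [frontier_eq_closure_inter_closure]
  have hIoi : Ioi (sSup T) ⊆ Tᶜ := fun t ht htT => (not_le.2 (mem_Ioi.1 ht)) (le_csSup hTb htT)
  refine ⟨subset_closure hsT, closure_mono hIoi ?_⟩
  rw [closure_Ioi]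
  exact self_mem_Ici

section MetricProjection

variable {F : Type*} [NormedAddCommGroup F] [InnerProductSpace ℝ F]

theorem norm_sub_le_of_forall_inner_le_zero {K : Set F} {u u' v v' : F} (hv : v ∈ K)
    (hv' : v' ∈ K) (h : ∀ w ∈ K, ⟪u - v, w - v⟫ ≤ 0) (h' : ∀ w ∈ K, ⟪u' - v', w - v'⟫ ≤ 0) :
    ‖v - v'‖ ≤ ‖u - u'‖ := by
  have key : ‖v - v'‖ ^ 2 ≤ ⟪u - u', v - v'⟫ := by
    have e : u - u' = (u - v) - (u' - v') + (v - v') := by abel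
    have h1 := h v' hv'
    have h2 := h' v hv
    rw [← neg_sub v v', inner_neg_right] at h1
    rw [e, inner_add_left, inner_sub_left, real_inner_self_eq_norm_sq]
    linarith
  rcases (norm_nonneg (v - v')).eq_or_lt with h0 | hpos
  · rw [← h0]; exact norm_nonneg _
  · nlinarith [real_inner_le_norm (u - u') (v - v')]

theorem exists_lipschitzWith_proj_convex {K : Set F} (hne : K.Nonempty) (hK : IsComplete K)
    (hconv : Convex ℝ K) :
    ∃ p : F → F, LipschitzWith 1 p ∧ (∀ x, p x ∈ K) ∧ (∀ z ∈ K, p z = z) ∧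
      ∀ x, ∀ t : ℝ, 0 ≤ t → p (p x + t • (x - p x)) = p x := by
  have hex : ∀ u, ∃ v ∈ K, ∀ w ∈ K, ⟪u - v, w - v⟫ ≤ 0 := fun u => by
    obtain ⟨v, hv, hmin⟩ := exists_norm_eq_iInf_of_complete_convex hne hK hconv u
    exact ⟨v, hv, (norm_eq_iInf_iff_real_inner_le_zero hconv hv).1 hmin⟩
  choose p hpK hp using hex
  have hunique : ∀ {u v}, v ∈ K → (∀ w ∈ K, ⟪u - v, w - v⟫ ≤ 0) → p u = v := by
    intro u v hv h
    have := norm_sub_le_of_forall_inner_le_zero (hpK u) hv (hp u) h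
    rwa [sub_self, norm_zero, norm_le_zero_iff, sub_eq_zero] at this
  refine ⟨p, LipschitzWith.of_dist_le_mul fun x y => ?_, hpK, fun z hz => hunique hz ?_,
    fun x t ht => hunique (hpK x) fun w hw => ?_⟩
  · simpa [dist_eq_norm] using norm_sub_le_of_forall_inner_le_zero (hpK x) (hpK y) (hp x) (hp y)
  · simp
  · rw [add_sub_cancel_left, real_inner_smul_left]
    exact mul_nonpos_of_nonneg_of_nonpos ht (hp x w hw)

end MetricProjection

theorem lipschitzWith_insertNth {k : ℕ} (i : Fin (k + 1)) (a : ℝ) :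
    LipschitzWith 1 (Fin.insertNth (α := fun _ => ℝ) i a) := by
  refine LipschitzWith.of_dist_le_mul fun w w' => ?_
  rw [NNReal.coe_one, one_mul, dist_pi_le_iff dist_nonneg]
  intro j
  cases j using Fin.succAboveCases i with
  | x => simp
  | p l => simpa using dist_le_pi_dist w w' l

theorem sphere_subset_iUnion_insertNth {k : ℕ} (c : ℝ) :
    Metric.sphere (0 : Fin (k + 1) → ℝ) c ⊆
      ⋃ i, ⋃ a ∈ ({c, -c} : Set ℝ),
        Fin.insertNth (α := fun _ => ℝ) i a '' Metric.closedBall 0 c := by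
  intro w hw
  rw [mem_sphere_zero_iff_norm] at hw
  obtain ⟨i, hi⟩ := Finite.exists_max fun j => |w j|
  have hwi : |w i| = c := le_antisymm (hw ▸ by simpa using norm_le_pi_norm w i)
    (hw ▸ (pi_norm_le_iff_of_nonneg (abs_nonneg _)).2 fun j => by simpa using hi j)
  refine mem_iUnion.2 ⟨i, mem_biUnion (x := w i) ?_ ⟨Fin.removeNth i w, ?_, ?_⟩⟩
  · rcases abs_eq (hwi ▸ abs_nonneg _) |>.1 hwi with h | h <;> simp [h]
  · rw [mem_closedBall_zero_iff, ← hw]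
    exact (pi_norm_le_iff_of_nonneg (norm_nonneg w)).2 fun j => norm_le_pi_norm w _
  · exact Fin.insertNth_self_removeNth i w

theorem hausdorffMeasure_sphere_pi_lt_top (k : ℕ) (c : ℝ) :
    μH[k] (Metric.sphere (0 : Fin (k + 1) → ℝ) c) < ⊤ := by
  have hball : μH[k] (Metric.closedBall (0 : Fin k → ℝ) c) < ⊤ := by
    rw [show (k : ℝ) = Fintype.card (Fin k) by simp, hausdorffMeasure_pi_real]
    exact measure_closedBall_lt_top
  refine (measure_mono (sphere_subset_iUnion_insertNth c)).trans_lt ?_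
  refine (measure_iUnion_fintype_le _ _).trans_lt <| ENNReal.sum_lt_top.2 fun i _ =>
    measure_biUnion_lt_top (toFinite _) fun a _ => ?_
  calc μH[k] (Fin.insertNth (α := fun _ => ℝ) i a '' Metric.closedBall 0 c)
      ≤ (1 : ℝ≥0) ^ (k : ℝ) * μH[k] (Metric.closedBall (0 : Fin k → ℝ) c) :=
        (lipschitzWith_insertNth i a).hausdorffMeasure_image_le (Nat.cast_nonneg k) _
    _ < ⊤ := by simpa using hball

theorem hausdorffMeasure_frontier_lt_top {k : ℕ} {K : Set (EuclideanSpace ℝ (Fin (k + 1)))}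
    (hne : K.Nonempty) (hK : IsCompact K) (hconv : Convex ℝ K) :
    μH[k] (frontier K) < ⊤ := by
  obtain ⟨p, hp, hpK, hpfix, hpray⟩ :=
    exists_lipschitzWith_proj_convex hne hK.isComplete hconv
  obtain ⟨C, hC⟩ := hK.isBounded.subset_closedBall 0
  set c := max C 0 + 1
  have hc : 0 < c := by positivity
  have hcK : ∀ y ∈ K, ‖WithLp.ofLp y‖ ≤ c := fun y hy =>
    ((pi_norm_le_iff_of_nonneg (norm_nonneg y)).2 fun i => PiLp.norm_apply_le y i).trans <|
      (mem_closedBall_zero_iff.1 (hC hy)).trans (by grind)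
  set f := p ∘ WithLp.toLp 2
  have hf := hp.comp (PiLp.lipschitzWith_toLp 2 fun _ : Fin (k + 1) => ℝ)
  -- A point outside `K` has the same projection as the point where the ray from its
  -- projection through it leaves the cube; the image of the cube's surface is closed.
  have hcover : frontier K ⊆ f '' Metric.sphere 0 c := by
    intro z hz
    rw [← ((isCompact_sphere 0 c).image hf.continuous).isClosed.closure_eq,
      Metric.mem_closure_iff]
    intro ε hε
    rw [frontier_eq_closure_inter_closure] at hz
    obtain ⟨x, hxK, hxz⟩ := Metric.mem_closure_iff.1 hz.2 ε hε
    have hd : WithLp.ofLp (x - p x) ≠ 0 := by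
      rw [ne_eq, WithLp.ofLp_eq_zero, sub_eq_zero]
      exact fun h => hxK (h ▸ hpK x)
    obtain ⟨t, ht, hmem⟩ := exists_nonneg_add_smul_mem_frontier Metric.isClosed_closedBall
      Metric.isBounded_closedBall (mem_closedBall_zero_iff.2 (hcK _ (hpK x))) hd
    rw [frontier_closedBall _ hc.ne'] at hmem
    refine ⟨_, mem_image_of_mem f hmem, ?_⟩
    have hfx : f (WithLp.ofLp (p x) + t • WithLp.ofLp (x - p x)) = p x := by
      simpa [f] using hpray x t ht
    rw [hfx, ← hpfix z (hK.isClosed.closure_eq ▸ hz.1)]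
    simpa using (hp.dist_le_mul z x).trans_lt (by simpa using hxz)
  calc μH[k] (frontier K) ≤ μH[k] (f '' Metric.sphere 0 c) := measure_mono hcover
    _ ≤ _ := hf.hausdorffMeasure_image_le (Nat.cast_nonneg k) _
    _ < ⊤ := ENNReal.mul_lt_top (by simp) (hausdorffMeasure_sphere_pi_lt_top k c)

theorem Convex.smul_add_mem_of_closedBall_subset {E : Type*} [NormedAddCommGroup E]
    [NormedSpace ℝ E] {K : Set E} (hK : Convex ℝ K) {r : ℝ}
    (hball : Metric.closedBall 0 r ⊆ K) {x v : E} (hx : x ∈ K) {t : ℝ} (ht₀ : 0 ≤ t)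
    (ht₁ : t < 1) (hv : ‖v‖ ≤ (1 - t) * r) : t • x + v ∈ K := by
  have h1t : 0 < 1 - t := sub_pos.2 ht₁
  have hv' : (1 - t)⁻¹ • v ∈ Metric.closedBall 0 r := by
    rw [mem_closedBall_zero_iff, norm_smul, Real.norm_of_nonneg (inv_nonneg.2 h1t.le),
      inv_mul_le_iff₀ h1t]
    exact hv
  simpa [smul_inv_smul₀ h1t.ne'] using hK hx (hball hv') ht₀ h1t.le (add_sub_cancel t 1)

theorem hausdorffMeasure_image_le_frontier {E X : Type*} [NormedAddCommGroup E]
    [NormedSpace ℝ E] [MeasurableSpace E] [BorelSpace E] [EMetricSpace X] [MeasurableSpace X]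
    [BorelSpace X] {π : E → X} (hπ : LipschitzWith 1 π) {v : E} (hv : v ≠ 0)
    (hπv : ∀ y (t : ℝ), π (y + t • v) = π y) {K : Set E} (hKc : IsClosed K)
    (hKb : Bornology.IsBounded K) {d : ℝ} (hd : 0 ≤ d) :
    μH[d] (π '' K) ≤ μH[d] (frontier K) := by
  have hsub : π '' K ⊆ π '' frontier K := by
    rintro _ ⟨y, hy, rfl⟩
    obtain ⟨t, -, ht⟩ := exists_nonneg_add_smul_mem_frontier hKc hKb hy hv
    exact ⟨_, ht, hπv y t⟩
  calc μH[d] (π '' K) ≤ μH[d] (π '' frontier K) := measure_mono hsub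
    _ ≤ (1 : ℝ≥0) ^ d * μH[d] (frontier K) := hπ.hausdorffMeasure_image_le hd _
    _ = μH[d] (frontier K) := by simp

theorem OrthonormalBasis.lipschitzWith_repr_comp {E ι ι' : Type*} [NormedAddCommGroup E]
    [InnerProductSpace ℝ E] [Fintype ι] [Fintype ι'] (b : OrthonormalBasis ι ℝ E)
    (f : ι' → ι) : LipschitzWith 1 fun y : E => fun j => b.repr y (f j) := by
  refine LipschitzWith.of_dist_le_mul fun y y' => ?_
  rw [NNReal.coe_one, one_mul, dist_pi_le_iff dist_nonneg, ← b.repr.dist_map]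
  exact fun j => PiLp.dist_apply_le _ _ (f j)

theorem exists_orthonormalBasis_apply_eq {E ι : Type*} [NormedAddCommGroup E]
    [InnerProductSpace ℝ E] [FiniteDimensional ℝ E] [Fintype ι]
    (hcard : Module.finrank ℝ E = Fintype.card ι)
    {u : E} (hu : ‖u‖ = 1) (i : ι) : ∃ b : OrthonormalBasis ι ℝ E, b i = u := by
  classical
  have horth : Orthonormal ℝ (Set.domRestrict {i} fun _ : ι => u) := by
    rw [orthonormal_iff_ite]
    rintro ⟨j, rfl⟩ ⟨l, rfl⟩
    simp [Set.domRestrict, hu]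
  obtain ⟨b, hb⟩ := horth.exists_orthonormalBasis_extension_of_card_eq hcard
  exact ⟨b, hb i rfl⟩

def coordCylinder (m : ℕ) (h ρ : ℝ) : Set (Fin (m + 1) → ℝ) :=
  {w | w 0 ∈ Icc 0 h ∧ WithLp.toLp 2 (Fin.tail w) ∈ Metric.closedBall 0 ρ}

theorem volume_coordCylinder (m : ℕ) (h ρ : ℝ) :
    volume (coordCylinder m h ρ) =
      ENNReal.ofReal h * volume (Metric.closedBall (0 : EuclideanSpace ℝ (Fin m)) ρ) := by
  have hB : MeasurableSet
      (WithLp.toLp 2 ⁻¹' Metric.closedBall (0 : EuclideanSpace ℝ (Fin m)) ρ) :=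
    measurableSet_closedBall.preimage (PiLp.volume_preserving_toLp (Fin m)).measurable
  have hcyl : coordCylinder m h ρ = MeasurableEquiv.piFinSuccAbove (fun _ => ℝ) 0 ⁻¹'
      (Icc 0 h ×ˢ (WithLp.toLp 2 ⁻¹' Metric.closedBall 0 ρ)) := by
    ext w
    simp [coordCylinder]
  rw [hcyl, (volume_preserving_piFinSuccAbove _ 0).measure_preimage
    (measurableSet_Icc.prod hB).nullMeasurableSet, Measure.volume_eq_prod, Measure.prod_prod,
    Real.volume_Icc, sub_zero, (PiLp.volume_preserving_toLp (Fin m)).measure_preimage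
    measurableSet_closedBall.nullMeasurableSet]

theorem coordCylinder_subset_image_repr {E : Type*} [NormedAddCommGroup E]
    [InnerProductSpace ℝ E] {m : ℕ} (b : OrthonormalBasis (Fin (m + 2)) ℝ E) {K : Set E}
    (hK : Convex ℝ K) {r R : ℝ}
    (hball : Metric.closedBall 0 r ⊆ K) (hR : 0 < R) (hx : R • b 1 ∈ K) :
    coordCylinder m (R / 2) (r / 2) ⊆ (fun y j => b.repr y j.succ) '' K := by
  rintro w ⟨⟨hw₀, hw₁⟩, hwt⟩
  set v := b.repr.symm (WithLp.toLp 2 (Fin.cons 0 (Fin.cons 0 (Fin.tail w))))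
  have hv : ‖v‖ ≤ r / 2 := by
    simpa [v, EuclideanSpace.norm_eq, Fin.sum_univ_succ] using hwt
  have hy : b.repr.symm (WithLp.toLp 2 (Fin.cons 0 w)) = (w 0 / R) • (R • b 1) + v := by
    apply b.repr.injective
    ext i
    refine Fin.cases ?_ (Fin.cases ?_ fun j => ?_) i <;>
      simp [v, hR.ne', Fin.succ_succ_ne_one, Fin.tail]
  have ht : w 0 / R ≤ 1 / 2 := by rw [div_le_iff₀ hR]; linarith
  refine ⟨_, hy ▸ hK.smul_add_mem_of_closedBall_subset hball hx (by positivity) (by linarith)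
    (hv.trans (by nlinarith [(mem_closedBall_zero_iff.1 hwt).trans' (norm_nonneg _)])), ?_⟩
  funext j
  simp

theorem ofReal_mul_volume_closedBall_le_hausdorffMeasure_frontier {E : Type*}
    [NormedAddCommGroup E] [InnerProductSpace ℝ E] [MeasurableSpace E] [BorelSpace E] {m : ℕ}
    (b : OrthonormalBasis (Fin (m + 2)) ℝ E) {K : Set E} (hKc : IsClosed K)
    (hKb : Bornology.IsBounded K) (hK : Convex ℝ K) {r R : ℝ}
    (hball : Metric.closedBall 0 r ⊆ K) (hR : 0 < R) (hx : R • b 1 ∈ K) :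
    ENNReal.ofReal (R / 2) * volume (Metric.closedBall (0 : EuclideanSpace ℝ (Fin m)) (r / 2))
      ≤ μH[(m + 1 : ℕ)] (frontier K) := by
  have hkill : ∀ y (t : ℝ), (fun j : Fin (m + 1) => b.repr (y + t • b 0) j.succ) =
      fun j => b.repr y j.succ := fun y t => by funext j; simp
  calc ENNReal.ofReal (R / 2) * volume (Metric.closedBall (0 : EuclideanSpace ℝ (Fin m)) (r / 2))
      = μH[(m + 1 : ℕ)] (coordCylinder m (R / 2) (r / 2)) := by
        rw [← volume_coordCylinder, show ((m + 1 : ℕ) : ℝ) = Fintype.card (Fin (m + 1)) by simp,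
          hausdorffMeasure_pi_real]
    _ ≤ μH[(m + 1 : ℕ)] ((fun y j => b.repr y j.succ) '' K) :=
        measure_mono (coordCylinder_subset_image_repr b hK hball hR hx)
    _ ≤ μH[(m + 1 : ℕ)] (frontier K) :=
        hausdorffMeasure_image_le_frontier (b.lipschitzWith_repr_comp Fin.succ)
          (b.orthonormal.ne_zero 0) hkill hKc hKb (Nat.cast_nonneg _)

theorem ofReal_unitBallVol (m : ℕ) :
    ENNReal.ofReal (unitBallVol m) = volume (Metric.closedBall (0 : EuclideanSpace ℝ (Fin m)) 1) :=
  ENNReal.ofReal_toReal measure_closedBall_lt_top.ne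

theorem unitBallVol_pos (m : ℕ) : 0 < unitBallVol m :=
  ENNReal.toReal_pos (Metric.measure_closedBall_pos volume _ one_pos).ne'
    measure_closedBall_lt_top.ne

theorem norm_mul_le_hausdorffMeasure_frontier {m : ℕ} {K : Set (EuclideanSpace ℝ (Fin (m + 2)))}
    (hK : IsCompact K) (hconv : Convex ℝ K) {r : ℝ} (hr : 0 < r)
    (hball : Metric.closedBall 0 r ⊆ K) {x : EuclideanSpace ℝ (Fin (m + 2))} (hx : x ∈ K) :
    ‖x‖ * (r ^ m * unitBallVol m) ≤ 2 ^ (m + 1) * (μH[(m + 1 : ℕ)] (frontier K)).toReal := by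
  rcases eq_or_ne x 0 with rfl | hx0
  · simp only [norm_zero, zero_mul]
    positivity
  have hR : 0 < ‖x‖ := norm_pos_iff.2 hx0
  obtain ⟨b, hb⟩ := exists_orthonormalBasis_apply_eq (by simp) (norm_smul_inv_norm (𝕜 := ℝ) hx0)
    (1 : Fin (m + 2))
  have hxb : ‖x‖ • b 1 = x := by rw [hb]; exact smul_inv_smul₀ hR.ne' x
  have hlow := ofReal_mul_volume_closedBall_le_hausdorffMeasure_frontier b hK.isClosed
    hK.isBounded hconv hball hR (hxb.symm ▸ hx)
  rw [Measure.addHaar_closedBall' _ _ (by positivity), finrank_euclideanSpace_fin,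
    ← ofReal_unitBallVol, ← ENNReal.ofReal_mul (by positivity),
    ← ENNReal.ofReal_mul (by positivity), ENNReal.ofReal_le_iff_le_toReal
      (hausdorffMeasure_frontier_lt_top ⟨x, hx⟩ hK hconv).ne] at hlow
  calc ‖x‖ * (r ^ m * unitBallVol m)
      = 2 ^ (m + 1) * (‖x‖ / 2 * ((r / 2) ^ m * unitBallVol m)) := by
        rw [div_pow, pow_succ]; field_simp
    _ ≤ _ := by gcongr

theorem stmt_6_general {n : ℕ} (hn : 2 ≤ n) (K : Set (EuclideanSpace ℝ (Fin n)))
    (hKcomp : IsCompact K) (hKconv : Convex ℝ K)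
    (r : ℝ) (hr : 0 < r)
    (hball : Metric.closedBall (0 : EuclideanSpace ℝ (Fin n)) r ⊆ K) :
    K ⊆ Metric.closedBall 0
      (2 ^ (n - 1) * (unitBallVol (n - 2))⁻¹ * (r ^ (n - 2))⁻¹ *
        (μH[(n : ℝ) - 1] (frontier K)).toReal) := by
  obtain ⟨m, rfl⟩ := Nat.exists_eq_add_of_le' hn
  intro x hx
  have hκ := unitBallVol_pos m
  rw [mem_closedBall_zero_iff, show m + 2 - 1 = m + 1 by omega, show m + 2 - 2 = m by omega,
    show ((m + 2 : ℕ) : ℝ) - 1 = (m + 1 : ℕ) by push_cast; ring,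
    show ∀ μ : ℝ, 2 ^ (m + 1) * (unitBallVol m)⁻¹ * (r ^ m)⁻¹ * μ =
      2 ^ (m + 1) * μ / (r ^ m * unitBallVol m) from fun μ => by field_simp,
    le_div_iff₀ (by positivity)]
  exact norm_mul_le_hausdorffMeasure_frontier hKcomp hKconv hr hball hx

/-- Lemma 2.1(ii): if `r·Bⁿ ⊆ K` then `K ⊆ R₀·Bⁿ` with
`R₀ = 2^{n−1}·κ_{n−2}⁻¹·r^{−(n−2)}·H^{n−1}(∂K)`. -/
theorem stmt_6 {n : ℕ} (hn : 2 ≤ n) (K : Set (EuclideanSpace ℝ (Fin n)))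
    (hKne : K.Nonempty) (hKcomp : IsCompact K) (hKconv : Convex ℝ K)
    (r : ℝ) (hr : 0 < r)
    (hball : Metric.closedBall (0 : EuclideanSpace ℝ (Fin n)) r ⊆ K) :
    K ⊆ Metric.closedBall 0
      (2 ^ (n - 1) * (unitBallVol (n - 2))⁻¹ * (r ^ (n - 2))⁻¹ *
        (μH[(n : ℝ) - 1] (frontier K)).toReal) :=
  stmt_6_general hn K hKcomp hKconv r hr hball
end
end

section
/- For every n ≥ 2 there is a constant c_n > 0 with the following property: whenever K' ⊆ K are origin-symmetric convex bodies in ℝⁿ (K = −K and K' = −K'), one has δ₂(K',K)² ≤ c_n · w(K)^{1−1/n} · (w(K) − w(K'))^{1+1/n}, where δ₂(K',K)² = ∫_{S^{n−1}} (h(K,u) − h(K',u))² dH^{n−1}(u). (Lemma 3.2 of the paper, obtained from Lemma 3.1 together with the Cauchy–Schwarz estimate δ₂² ≤ δ_∞·δ₁ and δ₁(K',K) = (ω_n/2)(w(K) − w(K')).) -/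
open MeasureTheory Set Pointwise
open scoped RealInnerProductSpace ENNReal NNReal

noncomputable section

/-!
Write `f = h(K,·) - h(K',·)` on the unit sphere `S`. Since `0 ≤ f ≤ δ := max_S f`, one has
`∫_S f² ≤ δ ∫_S f`, and `∫_S f = (ω_n/2)(w(K) - w(K'))` by symmetry. If `K` lies in the ball of
radius `R = max_K ‖·‖`, then `f` is `2R`-Lipschitz, so `f ≥ δ/2` on the spherical cap of radius
`δ/(4R)` around a maximum point; this cap has `H^{n-1}`-measure `≳ (δ/R)^{n-1}`, whence
`δ^n ≲ R^{n-1} ∫_S f`. The same argument applied to `h(K,·)` at `x/‖x‖`, `x ∈ K` of maximal norm,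
gives `R ≲ w(K)`.

Caps are compared with `(n-1)`-balls through the graph parametrisation `x ↦ x + √(1-‖x‖²) u` of
the hemisphere around `u` over `u^⊥`: the orthogonal projection onto `u^⊥` is `1`-Lipschitz and
undoes it, which bounds caps from below, and the parametrisation is Lipschitz away from the
equator, which together with compactness shows `H^{n-1}(S) < ∞`.
-/

open Metric Module Topology

section SupportFunction

variable {n : ℕ} {K K' : Set (EuclideanSpace ℝ (Fin n))} {u x : EuclideanSpace ℝ (Fin n)}

lemma bddAbove_inner_image (hK : IsCompact K) (u : EuclideanSpace ℝ (Fin n)) :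
    BddAbove ((fun x => ⟪u, x⟫) '' K) :=
  (hK.image (continuous_const.inner continuous_id)).bddAbove

lemma inner_le_suppFn (hK : IsCompact K) (hx : x ∈ K) : ⟪u, x⟫ ≤ suppFn K u :=
  le_csSup (bddAbove_inner_image hK u) ⟨x, hx, rfl⟩

lemma suppFn_le {b : ℝ} (hK : K.Nonempty) (h : ∀ x ∈ K, ⟪u, x⟫ ≤ b) : suppFn K u ≤ b :=
  csSup_le (hK.image _) (forall_mem_image.2 h)

lemma suppFn_mono (hK : IsCompact K) (hK' : K'.Nonempty) (h : K' ⊆ K) :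
    suppFn K' u ≤ suppFn K u :=
  csSup_le_csSup (bddAbove_inner_image hK u) (hK'.image _) (image_mono h)

lemma suppFn_le_of_norm_le {R : ℝ} (hK : K.Nonempty) (hR : ∀ x ∈ K, ‖x‖ ≤ R) (hu : ‖u‖ = 1) :
    suppFn K u ≤ R :=
  suppFn_le hK fun x hx => (real_inner_le_norm u x).trans (by rw [hu, one_mul]; exact hR x hx)

lemma lipschitzWith_suppFn {R : ℝ≥0} (hK : K.Nonempty) (hKc : IsCompact K)
    (hR : ∀ x ∈ K, ‖x‖ ≤ R) : LipschitzWith R (suppFn K) := by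
  refine LipschitzWith.of_le_add_mul R fun u v => suppFn_le hK fun x hx => ?_
  calc ⟪u, x⟫ = ⟪v, x⟫ + ⟪u - v, x⟫ := by rw [inner_sub_left]; ring
    _ ≤ suppFn K v + ‖u - v‖ * R :=
      add_le_add (inner_le_suppFn hKc hx)
        ((real_inner_le_norm _ _).trans (mul_le_mul_of_nonneg_left (hR x hx) (norm_nonneg _)))
    _ = suppFn K v + R * dist u v := by rw [dist_eq_norm, mul_comm]

lemma suppFn_neg_of_neg_eq (hK : K = -K) (u : EuclideanSpace ℝ (Fin n)) :
    suppFn K (-u) = suppFn K u := by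
  unfold suppFn
  conv_rhs => rw [hK, ← image_neg_eq_neg, image_image]
  simp only [inner_neg_left, inner_neg_right]

lemma abs_inner_le_suppFn (hK : K = -K) (hKc : IsCompact K) (hx : x ∈ K) :
    |⟪u, x⟫| ≤ suppFn K u := by
  have hnx : -x ∈ K := by rw [hK, mem_neg, neg_neg]; exact hx
  have := inner_le_suppFn (u := u) hKc hnx
  rw [inner_neg_right] at this
  exact abs_le.2 ⟨by linarith, inner_le_suppFn hKc hx⟩

lemma suppFn_nonneg (hK : K = -K) (hKne : K.Nonempty) (hKc : IsCompact K) : 0 ≤ suppFn K u :=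
  let ⟨_, hx⟩ := hKne
  (abs_nonneg _).trans (abs_inner_le_suppFn hK hKc hx)

lemma meanWidth_eq_of_neg_eq (hK : K = -K) :
    meanWidth K = 2 * (sphereArea n)⁻¹ *
      ∫ u in sphere (0 : EuclideanSpace ℝ (Fin n)) 1, suppFn K u ∂μH[(n : ℝ) - 1] := by
  simp only [meanWidth, suppFn_neg_of_neg_eq hK, ← two_mul, integral_const_mul]
  ring

end SupportFunction

lemma abs_sqrt_sub_sqrt_le {a b : ℝ} (ha : 1 / 4 ≤ a) (hb : 1 / 4 ≤ b) :
    |√a - √b| ≤ |a - b| := by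
  have hsa : 1 / 2 ≤ √a := (Real.le_sqrt (by norm_num) (by linarith)).2 (by linarith)
  have hsb : 1 / 2 ≤ √b := (Real.le_sqrt (by norm_num) (by linarith)).2 (by linarith)
  calc |√a - √b| ≤ |√a - √b| * (√a + √b) := le_mul_of_one_le_right (abs_nonneg _) (by linarith)
    _ = |a - b| := by
      rw [← abs_of_nonneg (by positivity : 0 ≤ √a + √b), ← abs_mul]
      congr 1
      linear_combination Real.mul_self_sqrt (by linarith : 0 ≤ a) -
        Real.mul_self_sqrt (by linarith : 0 ≤ b)

lemma le_mul_rpow_of_le_mul_of_pow_succ_le {X δ D C L : ℝ} {m : ℕ} (hX : X ≤ δ * D) (hδ : 0 ≤ δ)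
    (hD : 0 ≤ D) (hC : 0 ≤ C) (hL : 0 ≤ L) (hpow : δ ^ (m + 1) ≤ C * L ^ m * D) :
    X ≤ C ^ (1 / ((m + 1 : ℕ) : ℝ)) * L ^ (1 - 1 / ((m + 1 : ℕ) : ℝ)) *
      D ^ (1 + 1 / ((m + 1 : ℕ) : ℝ)) := by
  set p : ℝ := ((m + 1 : ℕ) : ℝ)
  have hp : 0 < p := by positivity
  have hLm : (L ^ m) ^ (1 / p) = L ^ (1 - 1 / p) := by
    rw [← Real.rpow_natCast, ← Real.rpow_mul hL]
    congr 1
    field_simp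
    simp [p]
  have hδ' : δ ≤ C ^ (1 / p) * L ^ (1 - 1 / p) * D ^ (1 / p) := by
    calc δ = (δ ^ (m + 1)) ^ (1 / p) := by rw [one_div, Real.pow_rpow_inv_natCast hδ m.succ_ne_zero]
      _ ≤ (C * L ^ m * D) ^ (1 / p) := by gcongr
      _ = C ^ (1 / p) * L ^ (1 - 1 / p) * D ^ (1 / p) := by
        rw [Real.mul_rpow (by positivity) hD, Real.mul_rpow hC (by positivity), hLm]
  calc X ≤ δ * D := hX
    _ ≤ C ^ (1 / p) * L ^ (1 - 1 / p) * D ^ (1 / p) * D := by gcongr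
    _ = C ^ (1 / p) * L ^ (1 - 1 / p) * D ^ (1 + 1 / p) := by
      rw [add_comm, Real.rpow_add' hD (by positivity), Real.rpow_one, mul_assoc]

section SphereGraph

variable {E F : Type*} [NormedAddCommGroup E] [InnerProductSpace ℝ E] [NormedAddCommGroup F]
  [InnerProductSpace ℝ F] {ι : F →ₗᵢ[ℝ] E} {u₀ : E}

/-- When `ι` maps `F` isometrically onto `u₀ᗮ`, this parametrises the hemisphere of the unit
sphere around `u₀` over the unit ball of `F`. -/
def sphereGraph (ι : F →ₗᵢ[ℝ] E) (u₀ : E) (x : F) : E :=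
  ι x + √(1 - ‖x‖ ^ 2) • u₀

lemma norm_apply_add_smul_sq (hu : ‖u₀‖ = 1) (hι : ∀ x, ⟪ι x, u₀⟫ = 0) (x : F) (t : ℝ) :
    ‖ι x + t • u₀‖ ^ 2 = ‖x‖ ^ 2 + t ^ 2 := by
  rw [norm_add_sq_real, real_inner_smul_right, hι, norm_smul, hu, ι.norm_map, Real.norm_eq_abs]
  simp

lemma norm_sphereGraph (hu : ‖u₀‖ = 1) (hι : ∀ x, ⟪ι x, u₀⟫ = 0) {x : F} (hx : ‖x‖ ≤ 1) :
    ‖sphereGraph ι u₀ x‖ = 1 := by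
  have h := norm_apply_add_smul_sq hu hι x √(1 - ‖x‖ ^ 2)
  rw [Real.sq_sqrt (by nlinarith [norm_nonneg x]), add_sub_cancel] at h
  exact (pow_eq_one_iff_of_nonneg (norm_nonneg _) two_ne_zero).1 h

lemma norm_sphereGraph_sub_le (hu : ‖u₀‖ = 1) (hι : ∀ x, ⟪ι x, u₀⟫ = 0) {x : F} (hx : ‖x‖ ≤ 1) :
    ‖sphereGraph ι u₀ x - u₀‖ ≤ √2 * ‖x‖ := by
  set s := √(1 - ‖x‖ ^ 2)
  have hs0 : 0 ≤ s := Real.sqrt_nonneg _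
  have hs2 : s ^ 2 = 1 - ‖x‖ ^ 2 := Real.sq_sqrt (by nlinarith [norm_nonneg x])
  have hs1 : s ≤ 1 := by nlinarith
  have h : sphereGraph ι u₀ x - u₀ = ι x + (s - 1) • u₀ := by
    rw [sphereGraph, sub_smul, one_smul, add_sub_assoc]
  refine le_of_pow_le_pow_left₀ two_ne_zero (by positivity) ?_
  rw [h, norm_apply_add_smul_sq hu hι, mul_pow, Real.sq_sqrt zero_le_two]
  nlinarith

lemma lipschitzOnWith_sphereGraph (hu : ‖u₀‖ = 1) :
    LipschitzOnWith 3 (sphereGraph ι u₀) {x | 4 * ‖x‖ ^ 2 ≤ 3} := by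
  refine LipschitzOnWith.of_dist_le_mul fun x hx y hy => ?_
  replace hx : 4 * ‖x‖ ^ 2 ≤ 3 := hx
  replace hy : 4 * ‖y‖ ^ 2 ≤ 3 := hy
  have hx1 : ‖x‖ ≤ 1 := by nlinarith [norm_nonneg x]
  have hy1 : ‖y‖ ≤ 1 := by nlinarith [norm_nonneg y]
  have hroot : |√(1 - ‖x‖ ^ 2) - √(1 - ‖y‖ ^ 2)| ≤ 2 * ‖x - y‖ := by
    refine (abs_sqrt_sub_sqrt_le (by linarith) (by linarith)).trans ?_
    rw [show 1 - ‖x‖ ^ 2 - (1 - ‖y‖ ^ 2) = -((‖x‖ - ‖y‖) * (‖x‖ + ‖y‖)) by ring, abs_neg,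
      abs_mul, abs_of_nonneg (by positivity : 0 ≤ ‖x‖ + ‖y‖), mul_comm 2]
    exact mul_le_mul (abs_norm_sub_norm_le x y) (by linarith) (by positivity) (norm_nonneg _)
  calc dist (sphereGraph ι u₀ x) (sphereGraph ι u₀ y)
      = ‖ι (x - y) + (√(1 - ‖x‖ ^ 2) - √(1 - ‖y‖ ^ 2)) • u₀‖ := by
        rw [dist_eq_norm, sphereGraph, sphereGraph, map_sub, sub_smul]
        congr 1
        abel
    _ ≤ ‖x - y‖ + 2 * ‖x - y‖ := by
        refine (norm_add_le _ _).trans (add_le_add (ι.norm_map _).le ?_)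
        rw [norm_smul, hu, mul_one, Real.norm_eq_abs]
        exact hroot
    _ = (3 : ℝ≥0) * dist x y := by
        rw [dist_eq_norm]
        push_cast
        ring

lemma exists_sphereGraph_eq (hu : ‖u₀‖ = 1) (hι : ∀ v, v ∈ range ι ↔ ⟪v, u₀⟫ = 0) {u : E}
    (hu1 : ‖u‖ = 1) (h0 : 0 ≤ ⟪u, u₀⟫) :
    ∃ x, ‖x‖ ^ 2 = 1 - ⟪u, u₀⟫ ^ 2 ∧ sphereGraph ι u₀ x = u := by
  obtain ⟨x, hx⟩ := (hι (u - ⟪u, u₀⟫ • u₀)).2 (by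
    rw [inner_sub_left, real_inner_smul_left, real_inner_self_eq_norm_sq, hu]
    ring)
  have hnorm : ‖x‖ ^ 2 = 1 - ⟪u, u₀⟫ ^ 2 := by
    have := norm_apply_add_smul_sq hu (fun y => (hι _).1 ⟨y, rfl⟩) x ⟪u, u₀⟫
    rw [hx, sub_add_cancel, hu1] at this
    linarith
  refine ⟨x, hnorm, ?_⟩
  rw [sphereGraph, hnorm, sub_sub_cancel, Real.sqrt_sq h0, hx, sub_add_cancel]

lemma starProjection_sphereGraph (hι : ∀ x, ⟪ι x, u₀⟫ = 0) (x : F) :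
    (ℝ ∙ u₀)ᗮ.starProjection (sphereGraph ι u₀ x) = ι x := by
  have hmem : ι x ∈ (ℝ ∙ u₀)ᗮ := by
    rw [Submodule.mem_orthogonal_singleton_iff_inner_right, real_inner_comm]
    exact hι x
  rw [sphereGraph, map_add, map_smul, Submodule.starProjection_eq_self_iff.2 hmem,
    Submodule.starProjection_orthogonalComplement_singleton_eq_zero, smul_zero, add_zero]

lemma exists_linearIsometry_range_iff {m : ℕ} (hE : finrank ℝ E = m + 1) (hu₀ : u₀ ≠ 0) :
    ∃ ι : EuclideanSpace ℝ (Fin m) →ₗᵢ[ℝ] E, ∀ v, v ∈ range ι ↔ ⟪v, u₀⟫ = 0 := by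
  have : Fact (finrank ℝ E = m + 1) := ⟨hE⟩
  let b := OrthonormalBasis.fromOrthogonalSpanSingleton (𝕜 := ℝ) m hu₀
  refine ⟨(ℝ ∙ u₀)ᗮ.subtypeₗᵢ.comp b.repr.symm.toLinearIsometry, fun v => ?_⟩
  rw [real_inner_comm, ← Submodule.mem_orthogonal_singleton_iff_inner_right]
  constructor
  · rintro ⟨x, rfl⟩
    exact (b.repr.symm x).2
  · intro hv
    exact ⟨b.repr ⟨v, hv⟩, by simp⟩

end SphereGraph

section SphereMeasure

variable {E : Type*} [NormedAddCommGroup E] [InnerProductSpace ℝ E] [MeasurableSpace E]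
  [BorelSpace E] {m : ℕ}

theorem ofReal_pow_mul_le_hausdorffMeasure_sphere_inter_closedBall (hE : finrank ℝ E = m + 1)
    {u₀ : E} (hu : ‖u₀‖ = 1) {r : ℝ} (hr0 : 0 ≤ r) (hr1 : r ≤ 1) :
    ENNReal.ofReal (r ^ m) * μH[m] (closedBall (0 : EuclideanSpace ℝ (Fin m)) 1) ≤
      μH[m] (sphere (0 : E) 1 ∩ closedBall u₀ (√2 * r)) := by
  obtain ⟨ι, hι⟩ := exists_linearIsometry_range_iff hE (ne_zero_of_norm_ne_zero (hu ▸ one_ne_zero))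
  have hι' : ∀ x, ⟪ι x, u₀⟫ = 0 := fun x => (hι _).1 ⟨x, rfl⟩
  set P := (ℝ ∙ u₀)ᗮ.starProjection
  have hP : LipschitzWith 1 P :=
    P.lipschitz.weaken (by
      rw [← NNReal.coe_le_coe, coe_nnnorm, NNReal.coe_one]
      exact Submodule.starProjection_norm_le _)
  have himage : ι '' closedBall 0 r ⊆ P '' (sphere 0 1 ∩ closedBall u₀ (√2 * r)) := by
    rintro _ ⟨x, hx, rfl⟩
    have hx1 : ‖x‖ ≤ 1 := (mem_closedBall_zero_iff.1 hx).trans hr1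
    refine ⟨sphereGraph ι u₀ x, ⟨?_, ?_⟩, starProjection_sphereGraph hι' x⟩
    · exact mem_sphere_zero_iff_norm.2 (norm_sphereGraph hu hι' hx1)
    · rw [mem_closedBall, dist_eq_norm]
      exact (norm_sphereGraph_sub_le hu hι' hx1).trans
        (by gcongr; exact mem_closedBall_zero_iff.1 hx)
  calc ENNReal.ofReal (r ^ m) * μH[m] (closedBall (0 : EuclideanSpace ℝ (Fin m)) 1)
      = μH[m] (closedBall (0 : EuclideanSpace ℝ (Fin m)) r) := by
        rw [Measure.addHaar_closedBall' _ _ hr0, finrank_euclideanSpace_fin]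
    _ = μH[m] (ι '' closedBall 0 r) :=
        (ι.isometry.hausdorffMeasure_image (Or.inl m.cast_nonneg) _).symm
    _ ≤ μH[m] (P '' (sphere 0 1 ∩ closedBall u₀ (√2 * r))) := measure_mono himage
    _ ≤ μH[m] (sphere 0 1 ∩ closedBall u₀ (√2 * r)) := by
        simpa using hP.hausdorffMeasure_image_le m.cast_nonneg (sphere 0 1 ∩ closedBall u₀ (√2 * r))

theorem hausdorffMeasure_sphere_inter_lt_top (hE : finrank ℝ E = m + 1) {u₀ : E}
    (hu : ‖u₀‖ = 1) : μH[m] (sphere (0 : E) 1 ∩ {u | 1 / 2 ≤ ⟪u, u₀⟫}) < ⊤ := by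
  obtain ⟨ι, hι⟩ := exists_linearIsometry_range_iff hE (ne_zero_of_norm_ne_zero (hu ▸ one_ne_zero))
  have hsub : sphere 0 1 ∩ {u | 1 / 2 ≤ ⟪u, u₀⟫} ⊆ sphereGraph ι u₀ '' {x | 4 * ‖x‖ ^ 2 ≤ 3} := by
    rintro u ⟨hu1, hu2⟩
    replace hu2 : 1 / 2 ≤ ⟪u, u₀⟫ := hu2
    obtain ⟨x, hx, rfl⟩ :=
      exists_sphereGraph_eq hu hι (mem_sphere_zero_iff_norm.1 hu1) (by linarith)
    exact ⟨x, show 4 * ‖x‖ ^ 2 ≤ 3 by nlinarith, rfl⟩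
  have hball : {x : EuclideanSpace ℝ (Fin m) | 4 * ‖x‖ ^ 2 ≤ 3} ⊆ closedBall 0 1 := fun x hx =>
    mem_closedBall_zero_iff.2 (by nlinarith [norm_nonneg x, show 4 * ‖x‖ ^ 2 ≤ 3 from hx])
  calc μH[m] (sphere (0 : E) 1 ∩ {u | 1 / 2 ≤ ⟪u, u₀⟫})
      ≤ μH[m] (sphereGraph ι u₀ '' {x | 4 * ‖x‖ ^ 2 ≤ 3}) := measure_mono hsub
    _ ≤ (3 : ℝ≥0) ^ (m : ℝ) * μH[m] {x : EuclideanSpace ℝ (Fin m) | 4 * ‖x‖ ^ 2 ≤ 3} :=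
        (lipschitzOnWith_sphereGraph hu).hausdorffMeasure_image_le m.cast_nonneg
    _ ≤ (3 : ℝ≥0) ^ (m : ℝ) * μH[m] (closedBall (0 : EuclideanSpace ℝ (Fin m)) 1) := by
        gcongr
    _ < ⊤ := ENNReal.mul_lt_top (ENNReal.rpow_lt_top_of_nonneg m.cast_nonneg ENNReal.coe_ne_top)
        measure_closedBall_lt_top

theorem hausdorffMeasure_sphere_lt_top (hE : finrank ℝ E = m + 1) :
    μH[m] (sphere (0 : E) 1) < ⊤ := by
  have := Module.finite_of_finrank_eq_succ hE
  refine (isCompact_sphere 0 1).measure_lt_top_of_nhdsWithin fun u hu =>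
    ⟨_, ?_, hausdorffMeasure_sphere_inter_lt_top hE (mem_sphere_zero_iff_norm.1 hu)⟩
  have hopen : {v : E | 1 / 2 < ⟪v, u⟫} ∈ 𝓝 u := by
    refine (isOpen_lt continuous_const (continuous_id.inner continuous_const)).mem_nhds ?_
    show 1 / 2 < ⟪u, u⟫
    rw [real_inner_self_eq_norm_sq, mem_sphere_zero_iff_norm.1 hu]
    norm_num
  exact Filter.inter_mem self_mem_nhdsWithin
    (mem_nhdsWithin_of_mem_nhds (Filter.mem_of_superset hopen fun v (hv : 1 / 2 < ⟪v, u⟫) => hv.le))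

theorem mul_pow_le_measureReal_sphere_inter_closedBall (hE : finrank ℝ E = m + 1) {u₀ : E}
    (hu : ‖u₀‖ = 1) {r : ℝ} (hr0 : 0 ≤ r) (hr1 : r ≤ 1) :
    (μH[m] (closedBall (0 : EuclideanSpace ℝ (Fin m)) 1)).toReal * r ^ m ≤
      μH[m].real (sphere (0 : E) 1 ∩ closedBall u₀ (√2 * r)) := by
  have h := ofReal_pow_mul_le_hausdorffMeasure_sphere_inter_closedBall hE hu hr0 hr1
  rw [← ENNReal.ofReal_toReal measure_closedBall_lt_top.ne, ← ENNReal.ofReal_mul (by positivity),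
    ENNReal.ofReal_le_iff_le_toReal ((measure_mono inter_subset_left).trans_lt
      (hausdorffMeasure_sphere_lt_top hE)).ne] at h
  rw [mul_comm]
  exact h

theorem hausdorffMeasure_sphere_pos (hE : finrank ℝ E = m + 1) :
    0 < μH[m] (sphere (0 : E) 1) := by
  have := Module.finite_of_finrank_eq_succ hE
  have := Module.nontrivial_of_finrank_eq_succ hE
  obtain ⟨u₀, hu⟩ := exists_norm_eq E zero_le_one
  calc 0 < ENNReal.ofReal (1 ^ m) * μH[m] (closedBall (0 : EuclideanSpace ℝ (Fin m)) 1) := by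
        simpa using Metric.measure_closedBall_pos _ (0 : EuclideanSpace ℝ (Fin m)) one_pos
    _ ≤ μH[m] (sphere 0 1 ∩ closedBall u₀ (√2 * 1)) :=
        ofReal_pow_mul_le_hausdorffMeasure_sphere_inter_closedBall hE hu zero_le_one le_rfl
    _ ≤ μH[m] (sphere (0 : E) 1) := measure_mono inter_subset_left

theorem integrableOn_sphere_of_continuous (hE : finrank ℝ E = m + 1) {f : E → ℝ}
    (hf : Continuous f) : IntegrableOn f (sphere 0 1) μH[m] := by
  have := Module.finite_of_finrank_eq_succ hE
  obtain ⟨C, hC⟩ := (isCompact_sphere (0 : E) 1).exists_bound_of_continuousOn hf.continuousOn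
  exact Measure.integrableOn_of_bounded (hausdorffMeasure_sphere_lt_top hE).ne
    hf.aestronglyMeasurable ((ae_restrict_iff' isClosed_sphere.measurableSet).2 (ae_of_all _ hC))

end SphereMeasure

/-- A cap of radius `√2 r`, `r ≤ 1`, on the unit sphere of an `(m+1)`-dimensional space has
`H^m`-measure at least `r^m` times that of the unit `m`-ball; this constant absorbs that measure. -/
def sphereCapConst (m : ℕ) : ℝ :=
  2 * (2 * √2) ^ m / (μH[m] (closedBall (0 : EuclideanSpace ℝ (Fin m)) 1)).toReal

lemma sphereCapConst_pos (m : ℕ) : 0 < sphereCapConst m := by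
  have := ENNReal.toReal_pos (measure_closedBall_pos μH[m] (0 : EuclideanSpace ℝ (Fin m))
    one_pos).ne' measure_closedBall_lt_top.ne
  unfold sphereCapConst
  positivity

section SphereIntegral

variable {E : Type*} [NormedAddCommGroup E] [InnerProductSpace ℝ E] [MeasurableSpace E]
  [BorelSpace E] {m : ℕ}

theorem pow_succ_le_sphereCapConst_mul_integral (hE : finrank ℝ E = m + 1) {f : E → ℝ} {L : ℝ≥0}
    (hf : LipschitzWith L f) (hf0 : ∀ u ∈ sphere (0 : E) 1, 0 ≤ f u) {u₀ : E} (hu₀ : ‖u₀‖ = 1)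
    {a : ℝ} (ha0 : 0 ≤ a) (ha : a ≤ f u₀) (haL : a ≤ L) :
    a ^ (m + 1) ≤ sphereCapConst m * L ^ m * ∫ u in sphere (0 : E) 1, f u ∂μH[m] := by
  have := Module.finite_of_finrank_eq_succ hE
  have hS : MeasurableSet (sphere (0 : E) 1) := isClosed_sphere.measurableSet
  have hint : 0 ≤ ∫ u in sphere (0 : E) 1, f u ∂μH[m] := setIntegral_nonneg hS hf0
  have hA := sphereCapConst_pos m
  rcases ha0.eq_or_lt with rfl | ha0
  · rw [zero_pow m.succ_ne_zero]
    positivity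
  have hL : (0 : ℝ) < L := ha0.trans_le haL
  set κ := (μH[m] (closedBall (0 : EuclideanSpace ℝ (Fin m)) 1)).toReal with hκ_def
  have hκ : 0 < κ := ENNReal.toReal_pos (measure_closedBall_pos _ _ one_pos).ne'
    measure_closedBall_lt_top.ne
  set r := a / (2 * √2 * L) with hr
  have hρ : √2 * r = a / (2 * L) := by
    rw [hr]
    field_simp
  have hr0 : 0 ≤ r := by positivity
  have hr1 : r ≤ 1 := by
    rw [div_le_one (by positivity)]
    nlinarith [Real.one_lt_sqrt_two]
  set cap := sphere (0 : E) 1 ∩ closedBall u₀ (√2 * r)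
  have hcap_fin : μH[m] cap ≠ ⊤ :=
    ((measure_mono inter_subset_left).trans_lt (hausdorffMeasure_sphere_lt_top hE)).ne
  -- on the cap, `f` has dropped by at most `L · √2 r = a / 2` from `f u₀ ≥ a`
  have hhalf : ∀ u ∈ cap, a / 2 ≤ f u := by
    rintro u ⟨-, hu⟩
    have hdist : dist u u₀ ≤ a / (2 * L) := by
      rw [← hρ]
      exact mem_closedBall.1 hu
    have hlip := (le_abs_self _).trans ((Real.dist_eq _ _).symm.trans_le (hf.dist_le_mul u₀ u))
    rw [dist_comm] at hlip
    have : (L : ℝ) * dist u u₀ ≤ a / 2 := by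
      calc (L : ℝ) * dist u u₀ ≤ L * (a / (2 * L)) := by gcongr
        _ = a / 2 := by field_simp
    linarith
  calc a ^ (m + 1) = sphereCapConst m * L ^ m * (a / 2 * (κ * r ^ m)) := by
        rw [hr, sphereCapConst, ← hκ_def, div_pow, mul_pow, mul_pow]
        field_simp
        ring
    _ ≤ sphereCapConst m * L ^ m * (a / 2 * μH[m].real cap) := by
        gcongr
        exact mul_pow_le_measureReal_sphere_inter_closedBall hE hu₀ hr0 hr1
    _ ≤ sphereCapConst m * L ^ m * ∫ u in cap, f u ∂μH[m] := by
        gcongr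
        exact setIntegral_ge_of_const_le_real (hS.inter measurableSet_closedBall) hcap_fin hhalf
          ((integrableOn_sphere_of_continuous hE hf.continuous).mono_set inter_subset_left)
    _ ≤ sphereCapConst m * L ^ m * ∫ u in sphere (0 : E) 1, f u ∂μH[m] := by
        refine mul_le_mul_of_nonneg_left ?_ (by positivity)
        exact setIntegral_mono_set (integrableOn_sphere_of_continuous hE hf.continuous)
          ((ae_restrict_iff' hS).2 (ae_of_all _ hf0)) inter_subset_left.eventuallyLE

theorem integral_sq_le_of_lipschitzWith (hE : finrank ℝ E = m + 1) {f : E → ℝ} {L : ℝ≥0}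
    (hf : LipschitzWith L f) (hf0 : ∀ u ∈ sphere (0 : E) 1, 0 ≤ f u)
    (hfL : ∀ u ∈ sphere (0 : E) 1, f u ≤ L) :
    ∫ u in sphere (0 : E) 1, f u ^ 2 ∂μH[m] ≤
      sphereCapConst m ^ (1 / ((m + 1 : ℕ) : ℝ)) * (L : ℝ) ^ (1 - 1 / ((m + 1 : ℕ) : ℝ)) *
        (∫ u in sphere (0 : E) 1, f u ∂μH[m]) ^ (1 + 1 / ((m + 1 : ℕ) : ℝ)) := by
  have := Module.finite_of_finrank_eq_succ hE
  have := Module.nontrivial_of_finrank_eq_succ hE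
  have hS : MeasurableSet (sphere (0 : E) 1) := isClosed_sphere.measurableSet
  have hint := integrableOn_sphere_of_continuous hE hf.continuous
  obtain ⟨u₀, hu₀, hmax⟩ := (isCompact_sphere (0 : E) 1).exists_isMaxOn
    (NormedSpace.sphere_nonempty.2 zero_le_one) hf.continuous.continuousOn
  have hsq : ∫ u in sphere (0 : E) 1, f u ^ 2 ∂μH[m] ≤
      f u₀ * ∫ u in sphere (0 : E) 1, f u ∂μH[m] := by
    rw [← integral_const_mul]
    refine setIntegral_mono_on (integrableOn_sphere_of_continuous hE (hf.continuous.pow 2))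
      (hint.const_mul _) hS fun u hu => ?_
    rw [sq]
    exact mul_le_mul_of_nonneg_right (hmax hu) (hf0 u hu)
  exact le_mul_rpow_of_le_mul_of_pow_succ_le hsq (hf0 u₀ hu₀) (setIntegral_nonneg hS hf0)
    (sphereCapConst_pos m).le L.2 (pow_succ_le_sphereCapConst_mul_integral hE hf hf0
      (mem_sphere_zero_iff_norm.1 hu₀) (hf0 u₀ hu₀) le_rfl (hfL u₀ hu₀))

end SphereIntegral

section ConvexBody

variable {m : ℕ} {K : Set (EuclideanSpace ℝ (Fin (m + 1)))}

lemma sphereArea_pos (m : ℕ) : 0 < sphereArea (m + 1) := by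
  have hE := finrank_euclideanSpace_fin (𝕜 := ℝ) (n := m + 1)
  rw [sphereArea, show ((m + 1 : ℕ) : ℝ) - 1 = m by simp]
  exact ENNReal.toReal_pos (hausdorffMeasure_sphere_pos hE).ne'
    (hausdorffMeasure_sphere_lt_top hE).ne

lemma integral_suppFn_eq_mul_meanWidth (hK : K = -K) :
    ∫ u in sphere (0 : EuclideanSpace ℝ (Fin (m + 1))) 1, suppFn K u ∂μH[m] =
      sphereArea (m + 1) / 2 * meanWidth K := by
  have := (sphereArea_pos m).ne'
  rw [meanWidth_eq_of_neg_eq hK, show ((m + 1 : ℕ) : ℝ) - 1 = m by simp]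
  field_simp

lemma integrableOn_suppFn (hK : K.Nonempty) (hKc : IsCompact K) :
    IntegrableOn (suppFn K) (sphere 0 1) μH[m] := by
  obtain ⟨R, hR⟩ := hKc.isBounded.exists_norm_le
  exact integrableOn_sphere_of_continuous finrank_euclideanSpace_fin
    (lipschitzWith_suppFn (R := R.toNNReal) hK hKc fun x hx =>
      (hR x hx).trans (Real.le_coe_toNNReal R)).continuous

lemma integral_suppFn_sub_eq {K' : Set (EuclideanSpace ℝ (Fin (m + 1)))} (hK : K.Nonempty)
    (hKc : IsCompact K) (hKs : K = -K) (hK' : K'.Nonempty) (hK'c : IsCompact K')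
    (hK's : K' = -K') :
    ∫ u in sphere 0 1, (suppFn K u - suppFn K' u) ∂μH[m] =
      sphereArea (m + 1) / 2 * (meanWidth K - meanWidth K') := by
  rw [integral_sub (integrableOn_suppFn hK hKc) (integrableOn_suppFn hK' hK'c),
    integral_suppFn_eq_mul_meanWidth hKs, integral_suppFn_eq_mul_meanWidth hK's]
  ring

lemma two_mul_norm_le_mul_meanWidth {x : EuclideanSpace ℝ (Fin (m + 1))} (hK : K = -K)
    (hKc : IsCompact K) (hx : x ∈ K) (hmax : ∀ y ∈ K, ‖y‖ ≤ ‖x‖) :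
    2 * ‖x‖ ≤ sphereCapConst m * sphereArea (m + 1) * meanWidth K := by
  have hnonneg : ∀ u, 0 ≤ suppFn K u := fun u => suppFn_nonneg hK ⟨x, hx⟩ hKc
  suffices ‖x‖ ≤ sphereCapConst m * ∫ u in sphere 0 1, suppFn K u ∂μH[m] by
    rw [integral_suppFn_eq_mul_meanWidth hK] at this
    linarith
  rcases eq_or_ne x 0 with rfl | hx0
  · simpa using mul_nonneg (sphereCapConst_pos m).le (integral_nonneg hnonneg)
  have hattained : ‖x‖ ≤ suppFn K (‖x‖⁻¹ • x) := by
    calc ‖x‖ = ⟪‖x‖⁻¹ • x, x⟫ := by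
          rw [real_inner_smul_left, real_inner_self_eq_norm_sq]
          field_simp
      _ ≤ suppFn K (‖x‖⁻¹ • x) := inner_le_suppFn hKc hx
  have key := pow_succ_le_sphereCapConst_mul_integral finrank_euclideanSpace_fin
    (lipschitzWith_suppFn (R := ‖x‖₊) ⟨x, hx⟩ hKc hmax) (fun u _ => hnonneg u)
    (norm_smul_inv_norm hx0) (norm_nonneg x) hattained le_rfl
  rw [coe_nnnorm, pow_succ', mul_right_comm (sphereCapConst m)] at key
  exact le_of_mul_le_mul_right key (pow_pos (norm_pos_iff.2 hx0) m)

lemma integral_sq_suppFn_sub_le {K' : Set (EuclideanSpace ℝ (Fin (m + 1)))}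
    {x₀ : EuclideanSpace ℝ (Fin (m + 1))} (hKc : IsCompact K) (hK' : K'.Nonempty)
    (hK'c : IsCompact K') (hK's : K' = -K') (hsub : K' ⊆ K) (hx₀ : x₀ ∈ K)
    (hmax : ∀ x ∈ K, ‖x‖ ≤ ‖x₀‖) :
    ∫ u in sphere 0 1, (suppFn K u - suppFn K' u) ^ 2 ∂μH[m] ≤
      sphereCapConst m ^ (1 / ((m + 1 : ℕ) : ℝ)) * (2 * ‖x₀‖) ^ (1 - 1 / ((m + 1 : ℕ) : ℝ)) *
        (∫ u in sphere 0 1, (suppFn K u - suppFn K' u) ∂μH[m]) ^ (1 + 1 / ((m + 1 : ℕ) : ℝ)) := by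
  have hLip := (lipschitzWith_suppFn (R := ‖x₀‖₊) ⟨x₀, hx₀⟩ hKc hmax).sub
    (lipschitzWith_suppFn (R := ‖x₀‖₊) hK' hK'c fun x hx => hmax x (hsub hx))
  rw [← two_mul] at hLip
  refine integral_sq_le_of_lipschitzWith finrank_euclideanSpace_fin hLip
    (fun u _ => sub_nonneg.2 (suppFn_mono hKc hK' hsub)) fun u hu => ?_
  have h1 := suppFn_le_of_norm_le ⟨x₀, hx₀⟩ hmax (mem_sphere_zero_iff_norm.1 hu)
  have h2 := suppFn_nonneg (u := u) hK's hK' hK'c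
  push_cast
  linarith [norm_nonneg x₀]

end ConvexBody

/-- Lemma 3.2: there is `c_n > 0` such that for all origin-symmetric convex bodies
`K' ⊆ K` one has `δ₂(K',K)² ≤ c_n·w(K)^{1−1/n}·(w(K)−w(K'))^{1+1/n}`. -/
theorem stmt_12 {n : ℕ} (hn : 2 ≤ n) :
    ∃ c : ℝ, 0 < c ∧
      ∀ K K' : Set (EuclideanSpace ℝ (Fin n)),
        K.Nonempty → IsCompact K → Convex ℝ K → K = -K →
        K'.Nonempty → IsCompact K' → Convex ℝ K' → K' = -K' →
        K' ⊆ K →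
        (∫ u in Metric.sphere (0 : EuclideanSpace ℝ (Fin n)) 1,
            (suppFn K u - suppFn K' u) ^ 2 ∂μH[(n : ℝ) - 1]) ≤
          c * meanWidth K ^ (1 - 1 / (n : ℝ)) *
            (meanWidth K - meanWidth K') ^ (1 + 1 / (n : ℝ)) := by
  obtain ⟨m, rfl⟩ : ∃ m, n = m + 1 := ⟨n - 1, by omega⟩
  rw [show ((m + 1 : ℕ) : ℝ) - 1 = m by simp]
  set p : ℝ := ((m + 1 : ℕ) : ℝ)
  set A := sphereCapConst m
  set ω := sphereArea (m + 1)
  have hA := sphereCapConst_pos m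
  have hω := sphereArea_pos m
  have hp : 0 ≤ 1 - 1 / p := sub_nonneg.2 ((div_le_one (by positivity)).2 (by simp [p]))
  refine ⟨A ^ (1 / p) * (A * ω) ^ (1 - 1 / p) * (ω / 2) ^ (1 + 1 / p), by positivity, ?_⟩
  intro K K' hK hKc _ hKs hK' hK'c _ hK's hsub
  obtain ⟨x₀, hx₀, hmax⟩ := hKc.exists_isMaxOn hK continuous_norm.continuousOn
  have hw := two_mul_norm_le_mul_meanWidth hKs hKc hx₀ hmax
  have hΔ := integral_suppFn_sub_eq hK hKc hKs hK' hK'c hK's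
  have hw0 : 0 ≤ meanWidth K := (mul_nonneg_iff_of_pos_left (by positivity)).1
    ((mul_nonneg zero_le_two (norm_nonneg x₀)).trans hw)
  have hΔ0 : 0 ≤ meanWidth K - meanWidth K' := (mul_nonneg_iff_of_pos_left (by positivity)).1
    (hΔ ▸ integral_nonneg fun u => sub_nonneg.2 (suppFn_mono hKc hK' hsub))
  calc _ ≤ A ^ (1 / p) * (2 * ‖x₀‖) ^ (1 - 1 / p) *
        (ω / 2 * (meanWidth K - meanWidth K')) ^ (1 + 1 / p) :=
      hΔ ▸ integral_sq_suppFn_sub_le hKc hK' hK'c hK's hsub hx₀ hmax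
    _ ≤ A ^ (1 / p) * (A * ω * meanWidth K) ^ (1 - 1 / p) *
        (ω / 2 * (meanWidth K - meanWidth K')) ^ (1 + 1 / p) := by gcongr
    _ = A ^ (1 / p) * (A * ω) ^ (1 - 1 / p) * (ω / 2) ^ (1 + 1 / p) * meanWidth K ^ (1 - 1 / p) *
        (meanWidth K - meanWidth K') ^ (1 + 1 / p) := by
      rw [Real.mul_rpow (x := A * ω) (by positivity) hw0,
        Real.mul_rpow (x := ω / 2) (by positivity) hΔ0]
      ring
end
end

section
/- Let K ⊂ ℝ² be a convex body with nonempty interior. Then the set (1/2)•∂K (the frontier of K scaled by the factor 1/2 about the origin) is a weak barrier for K: for every unit vector u ∈ S¹, ∫_{u^⊥} #(((1/2)•∂K) ∩ g_{x,u}) dH¹(x) ≥ H¹(K|u^⊥). (The example from the introduction of a weak barrier that need not be a barrier.) -/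
/-!
Put `K' = ½ • K`, so that `½ • ∂K = ∂K'`. A line in direction `u` meeting `int K'` cuts it in a
bounded open set of parameters, and the two ends of that set give two distinct points of `∂K'` on
the line. Hence the integrand is at least `2` on the projection of `int K'` to `u^⊥`. Since `K'`
lies in the closure of `int K'`, its projection lies in the closure of the projection of `int K'`,
an interval whose endpoints are null, so
`H¹(K|u^⊥) = 2 H¹(K'|u^⊥) ≤ 2 H¹(int K'|u^⊥) ≤ ∫_{u^⊥} #(½ • ∂K ∩ g_{x,u}) dH¹(x)`.
-/

open MeasureTheory Set Pointwise
open scoped RealInnerProductSpace ENNReal NNReal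

noncomputable section

open Topology

section Order

variable {α : Type*} [ConditionallyCompleteLinearOrder α] [TopologicalSpace α] [OrderTopology α]
  [DenselyOrdered α] {U : Set α}

theorem IsOpen.csInf_notMem [NoMinOrder α] (hU : IsOpen U) (hb : BddBelow U) : sInf U ∉ U :=
  fun h ↦
    let ⟨_, hlt, hmem⟩ := Filter.Eventually.exists_lt (hU.mem_nhds h)
    (csInf_le hb hmem).not_gt hlt

theorem IsOpen.csSup_notMem [NoMaxOrder α] (hU : IsOpen U) (hb : BddAbove U) : sSup U ∉ U :=
  IsOpen.csInf_notMem (α := αᵒᵈ) hU hb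

theorem IsOpen.two_le_encard_frontier [NoMinOrder α] [NoMaxOrder α] (hU : IsOpen U)
    (hne : U.Nonempty) (hbl : BddBelow U) (hba : BddAbove U) : 2 ≤ (frontier U).encard := by
  obtain ⟨t, ht⟩ := hne
  have hinf := hU.csInf_notMem hbl
  have hsup := hU.csSup_notMem hba
  have hlt : sInf U < sSup U :=
    (lt_of_le_of_ne (csInf_le hbl ht) (ne_of_mem_of_not_mem ht hinf).symm).trans
      (lt_of_le_of_ne (le_csSup hba ht) (ne_of_mem_of_not_mem ht hsup))
  rw [← encard_pair hlt.ne]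
  refine encard_le_encard (pair_subset ?_ ?_)
  · exact ⟨csInf_mem_closure ⟨t, ht⟩ hbl, by rwa [hU.interior_eq]⟩
  · exact ⟨csSup_mem_closure ⟨t, ht⟩ hba, by rwa [hU.interior_eq]⟩

end Order

theorem two_le_encard_frontier_inter_lineThrough {n : ℕ} {K : Set (EuclideanSpace ℝ (Fin n))}
    (hK : IsCompact K) {x u y : EuclideanSpace ℝ (Fin n)} (hu : u ≠ 0) (hy : y ∈ interior K)
    (hyx : y ∈ lineThrough x u) : 2 ≤ (frontier K ∩ lineThrough x u).encard := by
  set f : ℝ → EuclideanSpace ℝ (Fin n) := fun t ↦ x + t • u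
  have hf : IsClosedEmbedding f :=
    (Homeomorph.addLeft x).isClosedEmbedding.comp (isClosedEmbedding_smul_left hu)
  set U := f ⁻¹' interior K
  have hUbdd : Bornology.IsBounded U :=
    (hf.isCompact_preimage hK).isBounded.subset (preimage_mono interior_subset)
  have hUne : U.Nonempty := by
    obtain ⟨t, rfl⟩ := hyx
    exact ⟨t, hy⟩
  calc 2 ≤ (frontier U).encard :=
        (isOpen_interior.preimage hf.continuous).two_le_encard_frontier hUne hUbdd.bddBelow
          hUbdd.bddAbove
    _ = (f '' frontier U).encard := (hf.injective.encard_image _).symm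
    _ ≤ (frontier K ∩ lineThrough x u).encard := by
      refine encard_le_encard (image_subset_iff.2 fun t ht ↦ ⟨?_, t, rfl⟩)
      exact frontier_interior_subset (hf.continuous.frontier_preimage_subset _ ht)

theorem frontier_smul₀ {G₀ α : Type*} [GroupWithZero G₀] [MulAction G₀ α] [TopologicalSpace α]
    [ContinuousConstSMul G₀ α] {c : G₀} (hc : c ≠ 0) (s : Set α) :
    frontier (c • s) = c • frontier s :=
  ((Homeomorph.smulOfNeZero c hc).image_frontier s).symm

theorem Convex.addHaar_closure {E : Type*} [NormedAddCommGroup E] [NormedSpace ℝ E]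
    [MeasurableSpace E] [BorelSpace E] [FiniteDimensional ℝ E] (μ : Measure E)
    [μ.IsAddHaarMeasure] {s : Set E} (hs : Convex ℝ s) : μ (closure s) = μ s := by
  refine le_antisymm ?_ (measure_mono subset_closure)
  calc μ (closure s) ≤ μ s + μ (frontier s) := by
        rw [closure_eq_self_union_frontier]; exact measure_union_le _ _
    _ = μ s := by rw [hs.addHaar_frontier μ, add_zero]

theorem Convex.volume_image_le_volume_image_interior {E : Type*} [NormedAddCommGroup E]
    [NormedSpace ℝ E] {K : Set E} (hK : Convex ℝ K) (hKint : (interior K).Nonempty)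
    (g : E →L[ℝ] ℝ) : volume (g '' K) ≤ volume (g '' interior K) := by
  have hsub : g '' K ⊆ closure (g '' interior K) := by
    refine (image_mono ?_).trans (image_closure_subset_closure_image g.continuous)
    rw [hK.closure_interior_eq_closure_of_nonempty_interior hKint]
    exact subset_closure
  calc volume (g '' K) ≤ volume (closure (g '' interior K)) := measure_mono hsub
    _ = volume (g '' interior K) := (hK.interior.linear_image (g : E →ₗ[ℝ] ℝ)).addHaar_closure _

section UnitVector

variable {E : Type*} [NormedAddCommGroup E] [NormedSpace ℝ E] {v : E}

theorem isometry_smul_right_of_norm_eq_one (hv : ‖v‖ = 1) : Isometry fun t : ℝ ↦ t • v :=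
  Isometry.of_dist_eq fun s t ↦ by
    rw [dist_eq_norm, ← sub_smul, norm_smul, hv, mul_one, Real.dist_eq, Real.norm_eq_abs]

variable [MeasurableSpace E] [BorelSpace E]

theorem hausdorffMeasure_image_smul_right (hv : ‖v‖ = 1) (s : Set ℝ) :
    μH[1] ((fun t : ℝ ↦ t • v) '' s) = volume s := by
  rw [(isometry_smul_right_of_norm_eq_one hv).hausdorffMeasure_image (Or.inl zero_le_one),
    hausdorffMeasure_real]

theorem setLIntegral_range_smul_right (hv : ‖v‖ = 1) (F : E → ℝ≥0∞) :
    ∫⁻ x in range (fun t : ℝ ↦ t • v), F x ∂μH[1] = ∫⁻ t : ℝ, F (t • v) := by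
  have hiso := isometry_smul_right_of_norm_eq_one hv
  rw [← hiso.map_hausdorffMeasure (Or.inl zero_le_one),
    hiso.isClosedEmbedding.measurableEmbedding.lintegral_map, hausdorffMeasure_real]

end UnitVector

theorem exists_unit_orthogonal_decomposition {E : Type*} [NormedAddCommGroup E]
    [InnerProductSpace ℝ E] (hE : Module.finrank ℝ E = 2) {u : E} (hu : ‖u‖ = 1) :
    ∃ v : E, ‖v‖ = 1 ∧ ⟪v, u⟫ = 0 ∧ ∀ y, y = ⟪y, u⟫ • u + ⟪v, y⟫ • v := by
  have : Fact (Module.finrank ℝ E = 2) := ⟨hE⟩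
  have : FiniteDimensional ℝ E := Module.finite_of_finrank_eq_succ hE
  let o : Orientation ℝ E (Fin 2) := (Module.finBasisOfFinrankEq ℝ E hE).orientation
  refine ⟨o.rightAngleRotation u, by simp [hu], o.inner_rightAngleRotation_self u, fun y ↦ ?_⟩
  refine ext_inner_right ℝ fun z ↦ ?_
  have := o.inner_mul_inner_add_areaForm_mul_areaForm u y z
  simp only [inner_add_left, real_inner_smul_left, o.inner_rightAngleRotation_left, hu] at this ⊢
  rw [real_inner_comm u y]
  linarith

section OrthogonalDecomposition

variable {n : ℕ} {u v : EuclideanSpace ℝ (Fin n)}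

theorem projPerp_eq_image_inner (hdecomp : ∀ y, y = ⟪y, u⟫ • u + ⟪v, y⟫ • v)
    (A : Set (EuclideanSpace ℝ (Fin n))) :
    projPerp u A = (fun t : ℝ ↦ t • v) '' ((fun y ↦ ⟪v, y⟫) '' A) := by
  rw [projPerp, image_image]
  exact image_congr fun y _ ↦ (eq_sub_of_add_eq' (hdecomp y).symm).symm

theorem mem_lineThrough_inner_smul (hdecomp : ∀ y, y = ⟪y, u⟫ • u + ⟪v, y⟫ • v)
    (y : EuclideanSpace ℝ (Fin n)) :
    y ∈ lineThrough (⟪v, y⟫ • v) u :=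
  ⟨⟪y, u⟫, by rw [add_comm]; exact hdecomp y⟩

theorem setOf_inner_eq_zero_eq_range_smul (hdecomp : ∀ y, y = ⟪y, u⟫ • u + ⟪v, y⟫ • v)
    (hvu : ⟪v, u⟫ = 0) :
    {x | ⟪x, u⟫ = 0} = range fun t : ℝ ↦ t • v := by
  ext x
  refine ⟨fun hx ↦ ⟨⟪v, x⟫, ?_⟩, ?_⟩
  · simpa [show ⟪x, u⟫ = 0 from hx] using (hdecomp x).symm
  · rintro ⟨t, rfl⟩
    simp [real_inner_smul_left, hvu]

end OrthogonalDecomposition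

theorem stmt_15_general (K : Set (EuclideanSpace ℝ (Fin 2)))
    (hKcomp : IsCompact K) (hKconv : Convex ℝ K)
    (hKint : (interior K).Nonempty) :
    ∀ u : EuclideanSpace ℝ (Fin 2), ‖u‖ = 1 →
      μH[(1 : ℝ)] (projPerp u K) ≤
        ∫⁻ x in {x : EuclideanSpace ℝ (Fin 2) | ⟪x, u⟫ = 0},
          (((((2 : ℝ)⁻¹ • frontier K) ∩ lineThrough x u).encard : ℝ≥0∞)) ∂μH[(1 : ℝ)] := by
  intro u hu
  obtain ⟨v, hv, hvu, hdecomp⟩ := exists_unit_orthogonal_decomposition finrank_euclideanSpace_fin hu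
  set g := innerSL ℝ v
  set K' := (2 : ℝ)⁻¹ • K
  set F : EuclideanSpace ℝ (Fin 2) → ℝ≥0∞ :=
    fun x ↦ ((((2 : ℝ)⁻¹ • frontier K) ∩ lineThrough x u).encard : ℝ≥0∞)
  have hK : K = (2 : ℝ) • K' := (smul_inv_smul₀ two_ne_zero K).symm
  have hK'int : (interior K').Nonempty := by
    rw [interior_smul₀ (by norm_num)]
    exact hKint.smul_set
  have hopen : IsOpen (g '' interior K') :=
    g.isOpenMap (fun t ↦ ⟨t • v, by simp [g, hv]⟩) _ isOpen_interior
  have hcount : ∀ t ∈ g '' interior K', 2 ≤ F (t • v) := by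
    rintro _ ⟨y, hy, rfl⟩
    have h2 := two_le_encard_frontier_inter_lineThrough (hKcomp.smul (2 : ℝ)⁻¹)
      (by rintro rfl; simp at hu) hy (mem_lineThrough_inner_smul hdecomp y)
    rw [frontier_smul₀ (by norm_num)] at h2
    exact ENat.toENNReal_le.2 h2
  calc μH[1] (projPerp u K) = volume (g '' K) := by
        rw [projPerp_eq_image_inner hdecomp, hausdorffMeasure_image_smul_right hv]; rfl
    _ = 2 * volume (g '' K') := by
        rw [hK, image_smul_set, Measure.addHaar_smul]; simp
    _ ≤ 2 * volume (g '' interior K') :=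
        mul_le_mul_right ((hKconv.smul _).volume_image_le_volume_image_interior hK'int g) 2
    _ = ∫⁻ _ in g '' interior K', 2 := by rw [setLIntegral_const, mul_comm]
    _ ≤ ∫⁻ t in g '' interior K', F (t • v) := setLIntegral_mono' hopen.measurableSet hcount
    _ ≤ ∫⁻ t : ℝ, F (t • v) := setLIntegral_le_lintegral _ _
    _ = ∫⁻ x in {x | ⟪x, u⟫ = 0}, F x ∂μH[1] := by
        rw [setOf_inner_eq_zero_eq_range_smul hdecomp hvu, setLIntegral_range_smul_right hv]

/-- The introduction's example: for a planar convex body `K` with nonempty interior, the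
half-scaled boundary `½•∂K` is a weak barrier for `K`. -/
theorem stmt_15 (K : Set (EuclideanSpace ℝ (Fin 2)))
    (hKne : K.Nonempty) (hKcomp : IsCompact K) (hKconv : Convex ℝ K)
    (hKint : (interior K).Nonempty) :
    ∀ u : EuclideanSpace ℝ (Fin 2), ‖u‖ = 1 →
      μH[(1 : ℝ)] (projPerp u K) ≤
        ∫⁻ x in {x : EuclideanSpace ℝ (Fin 2) | ⟪x, u⟫ = 0},
          (((((2 : ℝ)⁻¹ • frontier K) ∩ lineThrough x u).encard : ℝ≥0∞)) ∂μH[(1 : ℝ)] :=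
  stmt_15_general K hKcomp hKconv hKint
end
end

section
/- Let v₁, …, v_m ∈ ℝ² be vectors whose real linear span is all of ℝ². Then the perimeter of the zonotope Z = ∑_{i=1}^m [0, v_i] (Minkowski sum of the segments [0, v_i]) equals twice the total length of the generating segments: H¹(∂Z) = 2·∑_{i=1}^m ‖v_i‖. (This is the identity |∂(co(B))| = 2|B| for a planar straight weak barrier B used in the proof of Proposition 1.1.) -/
open MeasureTheory Set Pointwise
open scoped RealInnerProductSpace ENNReal NNReal

noncomputable section

/-!
The frontier of the zonotope `Z` is the union of its exposed faces
`F(u) = {x ∈ Z | ∀ y ∈ Z, ⟪u, y⟫ ≤ ⟪u, x⟫}` over unit vectors `u`. Exposed faces commute with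
Minkowski sums, so `F(u) = ∑_{⟪u, vᵢ⟫ > 0} vᵢ + ∑_{⟪u, vᵢ⟫ = 0} [0, vᵢ]`. Hence `F(u)` is a single
point unless `u` is one of the finitely many unit normals of a nonzero `vᵢ`, and then it is a
segment of length `∑_{⟪u, vᵢ⟫ = 0} ‖vᵢ‖`. Two distinct faces meet in at most one point (opposite
faces not at all, since the `vᵢ` span the plane), so `H¹(∂Z) = ∑_u ∑_{⟪u, vᵢ⟫ = 0} ‖vᵢ‖`, and
every nonzero `vᵢ` is counted once for each of its two unit normals.
-/

open Module (finrank)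

namespace ContinuousLinearMap

variable {E : Type*} [AddCommGroup E] [TopologicalSpace E] [Module ℝ E] (l : StrongDual ℝ E)

theorem toExposed_add (A B : Set E) : l.toExposed (A + B) = l.toExposed A + l.toExposed B := by
  ext x
  constructor
  · rintro ⟨⟨a, ha, b, hb, rfl⟩, hmax⟩
    refine ⟨a, ⟨ha, fun a' ha' => ?_⟩, b, ⟨hb, fun b' hb' => ?_⟩, rfl⟩
    · simpa using hmax _ (add_mem_add ha' hb)
    · simpa using hmax _ (add_mem_add ha hb')
  · rintro ⟨a, ⟨ha, hma⟩, b, ⟨hb, hmb⟩, rfl⟩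
    refine ⟨add_mem_add ha hb, ?_⟩
    rintro _ ⟨a', ha', b', hb', rfl⟩
    simpa using add_le_add (hma a' ha') (hmb b' hb')

theorem toExposed_singleton (x : E) : l.toExposed {x} = {x} :=
  Subset.antisymm (fun _ hy => hy.1) fun _ hy => ⟨hy, fun _ hz => by rw [hz, hy]⟩

theorem toExposed_finsetSum {ι : Type*} (s : Finset ι) (A : ι → Set E) :
    l.toExposed (∑ i ∈ s, A i) = ∑ i ∈ s, l.toExposed (A i) := by
  classical
  induction s using Finset.induction_on with
  | empty => rw [Finset.sum_empty, Finset.sum_empty]; exact l.toExposed_singleton 0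
  | insert i s hi ih => rw [Finset.sum_insert hi, Finset.sum_insert hi, toExposed_add, ih]

theorem toExposed_segment_of_lt {a b : E} (h : l a < l b) :
    l.toExposed (segment ℝ a b) = {b} := by
  ext x
  constructor
  · rintro ⟨⟨α, β, hα, -, hαβ, rfl⟩, hmax⟩
    obtain rfl : β = 1 - α := by linarith
    have hb := hmax b (right_mem_segment ℝ a b)
    simp only [map_add, map_smul, smul_eq_mul] at hb
    obtain rfl : α = 0 := by nlinarith
    simp
  · intro hx
    rw [mem_singleton_iff.1 hx]
    refine ⟨right_mem_segment ℝ a b, ?_⟩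
    rintro _ ⟨α, β, hα, -, hαβ, rfl⟩
    obtain rfl : β = 1 - α := by linarith
    simp only [map_add, map_smul, smul_eq_mul]
    nlinarith [mul_nonneg hα (sub_nonneg.2 h.le)]

theorem toExposed_segment_of_eq {a b : E} (h : l a = l b) :
    l.toExposed (segment ℝ a b) = segment ℝ a b := by
  have hconst : ∀ y ∈ segment ℝ a b, l y = l a := by
    rintro _ ⟨α, β, -, -, hαβ, rfl⟩
    simp only [map_add, map_smul, smul_eq_mul, ← h, ← add_mul, hαβ, one_mul]
  refine Subset.antisymm (fun _ hx => hx.1) fun x hx => ⟨hx, fun y hy => ?_⟩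
  rw [hconst y hy, hconst x hx]

theorem toExposed_segment_zero (v : E) :
    l.toExposed (segment ℝ 0 v) =
      {if 0 < l v then v else 0} + if l v = 0 then segment ℝ 0 v else 0 := by
  rcases lt_trichotomy (l v) 0 with hv | hv | hv
  · rw [segment_symm, l.toExposed_segment_of_lt (by simpa using hv)]
    simp [hv.not_gt, hv.ne]
  · rw [l.toExposed_segment_of_eq (by simp [hv])]
    simp [hv]
  · rw [l.toExposed_segment_of_lt (by simpa using hv)]
    simp [hv, hv.ne']

end ContinuousLinearMap

section Zonotope

variable {ι E : Type*} [Fintype ι]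

section

variable [AddCommGroup E] [Module ℝ E] (v : ι → E)

def zonotope : Set E := ∑ i, segment ℝ 0 (v i)

theorem convex_zonotope : Convex ℝ (zonotope v) :=
  convex_sum _ fun i _ => convex_segment 0 (v i)

theorem segment_subset_zonotope (i : ι) : segment ℝ 0 (v i) ⊆ zonotope v := by
  classical
  intro x hx
  rw [← Fintype.sum_ite_eq' i fun _ => x]
  refine finsetSum_mem_finsetSum _ _ _ fun j _ => ?_
  split_ifs with hj
  · exact hj ▸ hx
  · exact left_mem_segment ℝ 0 (v j)

theorem zero_mem_zonotope : (0 : E) ∈ zonotope v := by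
  simpa [zonotope] using
    finsetSum_mem_finsetSum _ _ (fun _ => 0) fun i _ => left_mem_segment ℝ 0 (v i)

theorem toExposed_zonotope [TopologicalSpace E] (l : StrongDual ℝ E) :
    l.toExposed (zonotope v) =
      {∑ i with 0 < l (v i), v i} + ∑ i with l (v i) = 0, segment ℝ 0 (v i) := by
  simp only [zonotope, l.toExposed_finsetSum, l.toExposed_segment_zero, Finset.sum_add_distrib,
    finsetSum_singleton, Finset.sum_filter]

theorem isCompact_zonotope [TopologicalSpace E] [IsTopologicalAddGroup E] [ContinuousSMul ℝ E] :
    IsCompact (zonotope v) :=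
  Finset.sum_induction _ IsCompact (fun _ _ => IsCompact.add) isCompact_singleton fun i _ => by
    rw [← convexHull_pair (𝕜 := ℝ)]
    exact (toFinite _).isCompact_convexHull ℝ

end

variable [NormedAddCommGroup E] [NormedSpace ℝ E] (v : ι → E)

theorem interior_zonotope_nonempty [FiniteDimensional ℝ E]
    (hspan : Submodule.span ℝ (range v) = ⊤) : (interior (zonotope v)).Nonempty := by
  have hsub : convexHull ℝ (insert 0 (range v)) ⊆ zonotope v := by
    refine convexHull_min (insert_subset_iff.2 ⟨?_, ?_⟩) (convex_zonotope v)
    · exact zero_mem_zonotope v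
    · rintro _ ⟨i, rfl⟩
      exact segment_subset_zonotope v i (right_mem_segment ℝ 0 (v i))
  refine (interior_convexHull_nonempty_iff_affineSpan_eq_top.2 ?_).mono (interior_mono hsub)
  exact SetLike.coe_injective (by rw [affineSpan_insert_zero, hspan]; rfl)

end Zonotope

section Frontier

variable {E : Type*} [NormedAddCommGroup E] {A : Set E}

theorem ContinuousLinearMap.toExposed_subset_frontier [NormedSpace ℝ E] {l : StrongDual ℝ E}
    (hl : l ≠ 0) : l.toExposed A ⊆ frontier A := by
  refine fun x hx => ⟨subset_closure hx.1, fun hint => hl ?_⟩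
  have hmax : IsLocalMax l x := Filter.mem_of_superset (mem_interior_iff_mem_nhds.1 hint) hx.2
  exact hmax.hasFDerivAt_eq_zero l.hasFDerivAt

theorem Convex.exists_unit_toExposed_of_mem_frontier [InnerProductSpace ℝ E] [CompleteSpace E]
    (hA : Convex ℝ A) (hAc : IsClosed A) (hint : (interior A).Nonempty) {x : E}
    (hx : x ∈ frontier A) : ∃ u : E, ‖u‖ = 1 ∧ x ∈ (innerSL ℝ u).toExposed A := by
  obtain ⟨f, hf0, hf⟩ := geometric_hahn_banach_of_nonempty_interior_point hA hx.2 hint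
  set w := (InnerProductSpace.toDual ℝ E).symm f
  have hw : w ≠ 0 := by simpa [w] using hf0
  refine ⟨‖w‖⁻¹ • w, by simpa using norm_smul_inv_norm (𝕜 := ℝ) hw, hAc.frontier_subset hx,
    fun y hy => ?_⟩
  simp only [innerSL_apply_apply, real_inner_smul_left, w, InnerProductSpace.toDual_symm_apply]
  exact mul_le_mul_of_nonneg_left (hf y hy) (by positivity)

end Frontier

theorem Real.sum_segment_zero_eq_Icc {ι : Type*} (s : Finset ι) (a : ι → ℝ) :
    ∑ i ∈ s, segment ℝ 0 (a i) = Icc (∑ i ∈ s, min 0 (a i)) (∑ i ∈ s, max 0 (a i)) := by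
  classical
  induction s using Finset.induction_on with
  | empty => rw [Finset.sum_empty, Finset.sum_empty, Finset.sum_empty, Icc_self, singleton_zero]
  | insert i s hi ih =>
    rw [Finset.sum_insert hi, Finset.sum_insert hi, Finset.sum_insert hi, ih, segment_eq_Icc',
      Icc_add_Icc min_le_max (Finset.sum_le_sum fun _ _ => min_le_max)]

theorem hausdorffMeasure_sum_segment_smul {ι E : Type*} [NormedAddCommGroup E] [NormedSpace ℝ E]
    [MeasurableSpace E] [BorelSpace E] (s : Finset ι) (a : ι → ℝ) (e : E) :
    μH[1] (∑ i ∈ s, segment ℝ 0 (a i • e)) = ENNReal.ofReal (∑ i ∈ s, ‖a i • e‖) := by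
  have himage : ∑ i ∈ s, segment ℝ 0 (a i • e) =
      (fun r : ℝ => r • e) '' ∑ i ∈ s, segment ℝ 0 (a i) := by
    rw [show (fun r : ℝ => r • e) = LinearMap.toSpanSingleton ℝ E e from rfl, image_finsetSum]
    refine Finset.sum_congr rfl fun i _ => ?_
    rw [← LinearMap.coe_toAffineMap, image_segment]
    simp
  rw [himage, Real.sum_segment_zero_eq_Icc, hausdorffMeasure_smul_right_image,
    hausdorffMeasure_real, Real.volume_Icc, ← Finset.sum_sub_distrib]
  simp only [max_sub_min_eq_abs, sub_zero, norm_smul, Real.norm_eq_abs, ← Finset.sum_mul]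
  rw [ENNReal.ofReal_mul (Finset.sum_nonneg fun _ _ => abs_nonneg _), mul_comm, ENNReal.smul_def,
    smul_eq_mul, ofReal_norm, enorm_eq_nnnorm]

section Planar

variable {E : Type*} [NormedAddCommGroup E] [InnerProductSpace ℝ E] [Fact (finrank ℝ E = 2)]

attribute [local instance] FiniteDimensional.of_fact_finrank_eq_two

theorem exists_smul_eq_of_inner_eq_zero {u e w : E} (hu : u ≠ 0) (he : e ≠ 0)
    (hue : ⟪u, e⟫ = 0) (huw : ⟪u, w⟫ = 0) : ∃ c : ℝ, c • e = w := by
  have hK : finrank ℝ (ℝ ∙ u)ᗮ = 1 := Submodule.finrank_orthogonal_span_singleton hu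
  obtain ⟨c, hc⟩ := (finrank_eq_one_iff_of_nonzero'
    (⟨e, Submodule.mem_orthogonal_singleton_iff_inner_right.2 hue⟩ : (ℝ ∙ u)ᗮ)
    (by simpa using he)).1 hK ⟨w, Submodule.mem_orthogonal_singleton_iff_inner_right.2 huw⟩
  exact ⟨c, congrArg Subtype.val hc⟩

theorem exists_unit_inner_eq_zero {w : E} (hw : w ≠ 0) : ∃ e : E, ‖e‖ = 1 ∧ ⟪w, e⟫ = 0 := by
  have hK : 0 < finrank ℝ (ℝ ∙ w)ᗮ := by
    rw [Submodule.finrank_orthogonal_span_singleton (n := 1) hw]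
    exact one_pos
  obtain ⟨⟨e, he⟩, he0⟩ := Module.finrank_pos_iff_exists_ne_zero.1 hK
  refine ⟨‖e‖⁻¹ • e, by simpa using norm_smul_inv_norm (𝕜 := ℝ) (x := e) (by simpa using he0), ?_⟩
  rw [real_inner_smul_right, Submodule.mem_orthogonal_singleton_iff_inner_right.1 he, mul_zero]

theorem eq_or_eq_neg_of_inner_eq_zero {w u u' : E} (hw : w ≠ 0) (hu : ‖u‖ = 1) (hu' : ‖u'‖ = 1)
    (h : ⟪u, w⟫ = 0) (h' : ⟪u', w⟫ = 0) : u' = u ∨ u' = -u := by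
  have hu0 : u ≠ 0 := fun h0 => by simp [h0] at hu
  obtain ⟨c, rfl⟩ := exists_smul_eq_of_inner_eq_zero hw hu0 (by rwa [real_inner_comm])
    (by rwa [real_inner_comm] : ⟪w, u'⟫ = 0)
  rw [norm_smul, hu, mul_one, Real.norm_eq_abs] at hu'
  rcases (abs_eq zero_le_one).1 hu' with rfl | rfl <;> simp

theorem ncard_unit_inner_eq_zero {w : E} (hw : w ≠ 0) :
    {u : E | ‖u‖ = 1 ∧ ⟪u, w⟫ = 0}.ncard = 2 := by
  obtain ⟨e, he, hwe⟩ := exists_unit_inner_eq_zero hw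
  rw [real_inner_comm] at hwe
  have : {u : E | ‖u‖ = 1 ∧ ⟪u, w⟫ = 0} = {e, -e} := by
    ext u
    constructor
    · rintro ⟨hu, hwu⟩
      exact eq_or_eq_neg_of_inner_eq_zero hw he hu hwe hwu
    · rintro (rfl | rfl) <;> simp [he, hwe]
  rw [this, ncard_pair]
  intro h
  have h2 : (2 : ℝ) • e = 0 := by
    rw [two_smul]
    nth_rewrite 2 [h]
    exact add_neg_cancel e
  simp [smul_eq_zero.1 h2 |>.resolve_left two_ne_zero] at he

end Planar

section ZonotopeFaces

variable {ι E : Type*} [Fintype ι] [NormedAddCommGroup E] [InnerProductSpace ℝ E] (v : ι → E)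

def edgeNormals : Set E := {u | ‖u‖ = 1 ∧ ∃ i, v i ≠ 0 ∧ ⟪u, v i⟫ = 0}

theorem inner_sub_eq_zero_of_mem_toExposed {A : Set E} {u x y : E}
    (hx : x ∈ (innerSL ℝ u).toExposed A) (hy : y ∈ (innerSL ℝ u).toExposed A) :
    ⟪u, x - y⟫ = 0 := by
  have h₁ := hx.2 y hy.1
  have h₂ := hy.2 x hx.1
  simp only [innerSL_apply_apply] at h₁ h₂
  rw [inner_sub_right]
  linarith

theorem disjoint_toExposed_zonotope_neg (hspan : Submodule.span ℝ (range v) = ⊤) {u : E}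
    (hu : u ≠ 0) :
    Disjoint ((innerSL ℝ u).toExposed (zonotope v)) ((innerSL ℝ (-u)).toExposed (zonotope v)) := by
  refine disjoint_left.2 fun x hxu hxu' => hu ?_
  have hconst : ∀ y ∈ zonotope v, ⟪u, y⟫ = ⟪u, x⟫ := fun y hy => by
    have h₁ := hxu.2 y hy
    have h₂ := hxu'.2 y hy
    simp only [innerSL_apply_apply, inner_neg_left] at h₁ h₂
    linarith
  have hperp : Submodule.span ℝ (range v) ≤ (ℝ ∙ u)ᗮ := by
    rw [Submodule.span_le]
    rintro _ ⟨i, rfl⟩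
    rw [SetLike.mem_coe, Submodule.mem_orthogonal_singleton_iff_inner_right]
    simpa using (hconst _ (segment_subset_zonotope v i (right_mem_segment ℝ 0 (v i)))).trans
      (hconst 0 (zero_mem_zonotope v)).symm
  rw [hspan, top_le_iff, Submodule.orthogonal_eq_top_iff] at hperp
  exact Submodule.span_singleton_eq_bot.1 hperp

theorem toExposed_innerSL_zonotope (u : E) :
    (innerSL ℝ u).toExposed (zonotope v) =
      {∑ i with 0 < ⟪u, v i⟫, v i} + ∑ i with ⟪u, v i⟫ = 0, segment ℝ 0 (v i) :=
  toExposed_zonotope v (innerSL ℝ u)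

theorem frontier_zonotope_subset [FiniteDimensional ℝ E]
    (hspan : Submodule.span ℝ (range v) = ⊤) :
    frontier (zonotope v) ⊆ range (fun s : Finset ι => ∑ i ∈ s, v i) ∪
      ⋃ u ∈ edgeNormals v, (innerSL ℝ u).toExposed (zonotope v) := by
  intro x hx
  obtain ⟨u, hu, hxu⟩ := (convex_zonotope v).exists_unit_toExposed_of_mem_frontier
    (isCompact_zonotope v).isClosed (interior_zonotope_nonempty v hspan) hx
  by_cases hedge : u ∈ edgeNormals v
  · exact Or.inr (mem_biUnion hedge hxu)
  have hpar : ∑ i with ⟪u, v i⟫ = 0, segment ℝ 0 (v i) = 0 := by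
    refine Finset.sum_eq_zero fun i hi => ?_
    by_cases hvi : v i = 0
    · rw [hvi, segment_same, singleton_zero]
    · exact absurd ⟨hu, i, hvi, (Finset.mem_filter.1 hi).2⟩ hedge
  rw [toExposed_innerSL_zonotope, hpar, add_zero] at hxu
  exact Or.inl ⟨_, (mem_singleton_iff.1 hxu).symm⟩

end ZonotopeFaces

section PlanarZonotope

variable {ι E : Type*} [Fintype ι] [NormedAddCommGroup E] [InnerProductSpace ℝ E]
  [Fact (finrank ℝ E = 2)] (v : ι → E)

attribute [local instance] FiniteDimensional.of_fact_finrank_eq_two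

theorem finite_edgeNormals : (edgeNormals v).Finite := by
  have : edgeNormals v = ⋃ i ∈ {i | v i ≠ 0}, {u : E | ‖u‖ = 1 ∧ ⟪u, v i⟫ = 0} := by
    ext u
    simp [edgeNormals]
  rw [this]
  exact (toFinite _).biUnion fun i hi =>
    finite_of_ncard_pos (by rw [ncard_unit_inner_eq_zero hi]; norm_num)

theorem hausdorffMeasure_toExposed_zonotope [MeasurableSpace E] [BorelSpace E] {u : E}
    (hu : u ≠ 0) :
    μH[1] ((innerSL ℝ u).toExposed (zonotope v)) =
      ENNReal.ofReal (∑ i with ⟪u, v i⟫ = 0, ‖v i‖) := by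
  obtain ⟨e, he, hue⟩ := exists_unit_inner_eq_zero hu
  have hv : ∀ i ∈ Finset.univ.filter fun i => ⟪u, v i⟫ = 0, ⟪e, v i⟫ • e = v i := by
    intro i hi
    obtain ⟨c, hc⟩ := exists_smul_eq_of_inner_eq_zero hu (by rintro rfl; simp at he) hue
      (Finset.mem_filter.1 hi).2
    rw [← hc, real_inner_smul_right, real_inner_self_eq_norm_sq, he, one_pow, mul_one]
  rw [toExposed_innerSL_zonotope, singleton_add]
  refine ((IsometryEquiv.addLeft _).hausdorffMeasure_image 1 _).trans ?_
  rw [Finset.sum_congr rfl fun i hi => congrArg (segment ℝ 0) (hv i hi).symm,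
    hausdorffMeasure_sum_segment_smul]
  exact congrArg ENNReal.ofReal (Finset.sum_congr rfl fun i hi => congrArg norm (hv i hi))

theorem subsingleton_toExposed_zonotope_inter (hspan : Submodule.span ℝ (range v) = ⊤)
    {u u' : E} (hu : ‖u‖ = 1) (hu' : ‖u'‖ = 1) (hne : u ≠ u') :
    ((innerSL ℝ u).toExposed (zonotope v) ∩
      (innerSL ℝ u').toExposed (zonotope v)).Subsingleton := by
  rintro x ⟨hxu, hxu'⟩ y ⟨hyu, hyu'⟩
  by_contra hxy
  rcases eq_or_eq_neg_of_inner_eq_zero (sub_ne_zero.2 hxy) hu hu'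
    (inner_sub_eq_zero_of_mem_toExposed hxu hyu)
    (inner_sub_eq_zero_of_mem_toExposed hxu' hyu') with rfl | rfl
  · exact hne rfl
  · exact disjoint_left.1 (disjoint_toExposed_zonotope_neg v hspan (by rintro rfl; simp at hu))
      hxu hxu'

theorem hausdorffMeasure_frontier_zonotope_eq_sum [MeasurableSpace E] [BorelSpace E]
    (hspan : Submodule.span ℝ (range v) = ⊤) :
    μH[1] (frontier (zonotope v)) =
      ∑ u ∈ (finite_edgeNormals v).toFinset, μH[1] ((innerSL ℝ u).toExposed (zonotope v)) := by
  have := Measure.nullSingletonClass_hausdorff E (d := 1) one_pos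
  have hvertices : μH[1] (range fun s : Finset ι => ∑ i ∈ s, v i) = 0 :=
    (finite_range _).measure_zero _
  have hedges : ⋃ u ∈ (finite_edgeNormals v).toFinset, (innerSL ℝ u).toExposed (zonotope v) =
      ⋃ u ∈ edgeNormals v, (innerSL ℝ u).toExposed (zonotope v) := by
    simp only [Finite.mem_toFinset]
  rw [← measure_biUnion_finset₀ ?_ ?_, hedges]
  · refine le_antisymm ?_ (measure_mono (iUnion₂_subset fun u hu => ?_))
    · rw [← measure_sdiff_null hvertices]
      exact measure_mono (sdiff_subset_iff.2 (frontier_zonotope_subset v hspan))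
    · refine ContinuousLinearMap.toExposed_subset_frontier fun h => ?_
      have hu1 := hu.1
      rw [← innerSL_apply_norm (𝕜 := ℝ), h, norm_zero] at hu1
      exact zero_ne_one hu1
  · intro u hu u' hu' hne
    rw [Finite.coe_toFinset] at hu hu'
    exact (subsingleton_toExposed_zonotope_inter v hspan hu.1 hu'.1 hne).measure_zero _
  · exact fun u _ => (ContinuousLinearMap.toExposed.isExposed.isClosed
      (isCompact_zonotope v).isClosed).measurableSet.nullMeasurableSet

theorem sum_edgeNormals_sum_norm :
    ∑ u ∈ (finite_edgeNormals v).toFinset, ∑ i with ⟪u, v i⟫ = 0, ‖v i‖ = 2 * ∑ i, ‖v i‖ := by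
  rw [Finset.sum_comm' (t' := Finset.univ)
    (s' := fun i => (finite_edgeNormals v).toFinset.filter fun u => ⟪u, v i⟫ = 0) (by simp),
    Finset.mul_sum]
  refine Finset.sum_congr rfl fun i _ => ?_
  rw [Finset.sum_const, nsmul_eq_mul]
  rcases eq_or_ne (v i) 0 with hvi | hvi
  · simp [hvi]
  have hcard : ((finite_edgeNormals v).toFinset.filter fun u => ⟪u, v i⟫ = 0).card = 2 := by
    rw [← ncard_coe_finset, ← ncard_unit_inner_eq_zero hvi, Finset.coe_filter]
    congr 1
    ext u
    simp only [edgeNormals, Finite.mem_toFinset]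
    exact ⟨fun h => ⟨h.1.1, h.2⟩, fun h => ⟨⟨h.1, i, hvi, h.2⟩, h.2⟩⟩
  rw [hcard, Nat.cast_ofNat]

theorem hausdorffMeasure_frontier_zonotope [MeasurableSpace E] [BorelSpace E]
    (hspan : Submodule.span ℝ (range v) = ⊤) :
    μH[1] (frontier (zonotope v)) = ENNReal.ofReal (2 * ∑ i, ‖v i‖) := by
  rw [hausdorffMeasure_frontier_zonotope_eq_sum v hspan, ← sum_edgeNormals_sum_norm v,
    ENNReal.ofReal_sum_of_nonneg fun _ _ => Finset.sum_nonneg fun _ _ => norm_nonneg _]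
  refine Finset.sum_congr rfl fun u hu => hausdorffMeasure_toExposed_zonotope v ?_
  rintro rfl
  simp [edgeNormals] at hu

end PlanarZonotope

/-- The perimeter of a planar zonotope `Z = ∑ [0,vᵢ]` whose generators span `ℝ²` equals
twice the total length of its generating segments: `H¹(∂Z) = 2·∑ ‖vᵢ‖`. -/
theorem stmt_16 {m : ℕ} (v : Fin m → EuclideanSpace ℝ (Fin 2))
    (hspan : Submodule.span ℝ (Set.range v) = ⊤) :
    μH[(1 : ℝ)] (frontier (∑ i, segment ℝ 0 (v i))) = ENNReal.ofReal (2 * ∑ i, ‖v i‖) :=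
  have : Fact (finrank ℝ (EuclideanSpace ℝ (Fin 2)) = 2) := ⟨finrank_euclideanSpace_fin⟩
  hausdorffMeasure_frontier_zonotope v hspan
end
end
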